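/- arXiv:2007.13442 — 9 statements merged into one kernel-verified Lean document; each statement's English description precedes it below -/
import Mathlib

section
/- Let m ≥ 2 be an integer, let p be a probability vector on {1,…,m} and let (X_t)_{t≥1} be i.i.d. samples from p. Let p̂_n be the empirical probability vector after n samples, p̂_{n,k} = (1/n) Σ_{ℓ=1}^n 1{X_ℓ = k}. Then for every δ ∈ (0,1], P( ∃ n ∈ ℕ* : n · KL(p̂_n , p) > log(1/δ) + (m−1) · log( e · (1 + n/(m−1)) ) ) ≤ δ. -/
/-!
Let `q` be the Laplace mixture: the law of a sequence drawn i.i.d. from a parameter chosen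
uniformly on the simplex. It gives each word of length `n` with letter counts `c` the mass
`(m-1)! ∏ cₖ! / (n+m-1)!`, while `p` gives it `∏ pₖ^cₖ = exp (-n KL(p̂ₙ, p)) ∏ (cₖ/n)^cₖ`.
Since `n! / ∏ cₖ! ≤ nⁿ / ∏ cₖ^cₖ` and `C(n+m-1, m-1) ≤ (e (1 + n/(m-1)))^(m-1)`, on the deviation
event at time `n` the likelihood ratio `q/p` of the first `n` samples exceeds `1/δ`. Ville's
inequality for the nonnegative martingale `q/p` bounds the probability that this ever happens
by `δ`.
-/

open Finset MeasureTheory ProbabilityTheory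

/-- Kullback–Leibler divergence between two finitely supported distributions, with the
conventions `0 · log(0/x) = 0` and `KL(p,q) = +∞` when `p(s) > 0` while `q(s) = 0`. -/
noncomputable def KLdiv {S : Type*} [Fintype S] (p q : S → ℝ) : EReal :=
  ∑ s, if p s = 0 then (0 : EReal)
    else if q s = 0 then (⊤ : EReal)
    else ((p s * Real.log (p s / q s) : ℝ) : EReal)

open scoped Nat

section Ville

variable {α : Type*}

theorem Fin.take_snoc_of_le {N : ℕ} (x : Fin N → α) (a : α) {n : ℕ} (h : n ≤ N) :
    Fin.take n (h.trans N.le_succ) (Fin.snoc x a : Fin (N + 1) → α) = Fin.take n h x := by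
  rw [← Fin.take_init, Fin.init_snoc]

theorem Fin.sum_univ_fun_snoc [Fintype α] {M : Type*} [AddCommMonoid M] {N : ℕ}
    (f : (Fin (N + 1) → α) → M) : ∑ x, f x = ∑ x : Fin N → α, ∑ a, f (Fin.snoc x a) := by
  rw [← (Fin.snocEquiv fun _ => α).sum_comp, Fintype.sum_prod_type, Finset.sum_comm]
  rfl

theorem Fin.sum_prod_snoc [Fintype α] {R : Type*} [CommSemiring R] {p : α → R}
    (hp : ∑ a, p a = 1) {N : ℕ} (x : Fin N → α) :
    ∑ a, ∏ ℓ, p ((Fin.snoc x a : Fin (N + 1) → α) ℓ) = ∏ ℓ, p (x ℓ) := by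
  simp [Fin.prod_univ_castSucc, ← mul_sum, hp]

/-- The likelihood ratio `Q / P` reaches `1 / δ` along some prefix of `x`. -/
def RatioReaches (P Q : (n : ℕ) → (Fin n → α) → ℝ) (δ : ℝ) {N : ℕ} (x : Fin N → α) : Prop :=
  ∃ n, ∃ h : n ≤ N, P n (Fin.take n h x) ≤ δ * Q n (Fin.take n h x)

variable {P Q : (n : ℕ) → (Fin n → α) → ℝ} {δ : ℝ}

theorem ratioReaches_snoc {N : ℕ} (x : Fin N → α) (a : α) :
    RatioReaches P Q δ (Fin.snoc x a : Fin (N + 1) → α) ↔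
      RatioReaches P Q δ x ∨ P (N + 1) (Fin.snoc x a) ≤ δ * Q (N + 1) (Fin.snoc x a) := by
  constructor
  · rintro ⟨n, hn, h⟩
    rcases Nat.lt_or_eq_of_le hn with hlt | rfl
    · exact Or.inl ⟨n, Nat.le_of_lt_succ hlt, by rwa [← Fin.take_snoc_of_le x a]⟩
    · exact Or.inr (by rwa [Fin.take_eq_self] at h)
  · rintro (⟨n, hn, h⟩ | h)
    · exact ⟨n, hn.trans N.le_succ, by rwa [Fin.take_snoc_of_le x a]⟩
    · exact ⟨N + 1, le_rfl, by rwa [Fin.take_eq_self]⟩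

variable [Fintype α]

/- Summing out the last letter does not increase the summand: it is `δ Q` before the ratio reaches
`1 / δ` and `P` afterwards, and `P ≤ δ Q` at the crossing. -/
open Classical in
theorem sum_ite_ratioReaches_le (hP : ∀ n x, ∑ a, P (n + 1) (Fin.snoc x a) ≤ P n x)
    (hQ : ∀ n x, ∑ a, Q (n + 1) (Fin.snoc x a) ≤ Q n x) (hQ₀ : Q 0 Fin.elim0 ≤ 1)
    (hδ : 0 ≤ δ) (N : ℕ) :
    ∑ x : Fin N → α, (if RatioReaches P Q δ x then P N x else δ * Q N x) ≤ δ := by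
  induction N with
  | zero =>
    have hQδ : δ * Q 0 Fin.elim0 ≤ δ := mul_le_of_le_one_right hδ hQ₀
    rw [Fintype.sum_unique, Subsingleton.elim default Fin.elim0]
    split_ifs with h
    · obtain ⟨n, hn, h⟩ := h
      obtain rfl := Nat.le_zero.1 hn
      rw [Subsingleton.elim (Fin.take 0 hn Fin.elim0) Fin.elim0] at h
      exact h.trans hQδ
    · exact hQδ
  | succ N ih =>
    refine le_trans ?_ ih
    rw [Fin.sum_univ_fun_snoc]
    refine sum_le_sum fun x _ => ?_
    by_cases hx : RatioReaches P Q δ x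
    · simp only [ratioReaches_snoc, hx, true_or, if_true]
      exact hP N x
    · simp only [ratioReaches_snoc, hx, false_or, if_false]
      calc ∑ a, (if P (N + 1) (Fin.snoc x a) ≤ δ * Q (N + 1) (Fin.snoc x a)
              then P (N + 1) (Fin.snoc x a) else δ * Q (N + 1) (Fin.snoc x a))
          ≤ ∑ a, δ * Q (N + 1) (Fin.snoc x a) := sum_le_sum fun a _ => by split_ifs <;> simp_all
        _ ≤ δ * Q N x := by rw [← mul_sum]; exact mul_le_mul_of_nonneg_left (hQ N x) hδ

open Classical in
theorem sum_filter_ratioReaches_le (hP : ∀ n x, ∑ a, P (n + 1) (Fin.snoc x a) ≤ P n x)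
    (hQ : ∀ n x, ∑ a, Q (n + 1) (Fin.snoc x a) ≤ Q n x) (hQ₀ : Q 0 Fin.elim0 ≤ 1)
    (hQ_nonneg : ∀ n x, 0 ≤ Q n x) (hδ : 0 ≤ δ) (N : ℕ) :
    ∑ x ∈ univ.filter (RatioReaches P Q δ), P N x ≤ δ := by
  calc ∑ x ∈ univ.filter (RatioReaches P Q δ), P N x
      = ∑ x : Fin N → α, if RatioReaches P Q δ x then P N x else 0 := sum_filter _ _
    _ ≤ ∑ x : Fin N → α, if RatioReaches P Q δ x then P N x else δ * Q N x := by
      gcongr with x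
      split_ifs
      exacts [le_rfl, mul_nonneg hδ (hQ_nonneg N x)]
    _ ≤ δ := sum_ite_ratioReaches_le hP hQ hQ₀ hδ N

end Ville

section SymbolCount

variable {α : Type*} [DecidableEq α]

def symbolCount {n : ℕ} (x : Fin n → α) (a : α) : ℕ := #{ℓ | x ℓ = a}

theorem symbolCount_snoc {n : ℕ} (x : Fin n → α) (a : α) :
    symbolCount (Fin.snoc x a : Fin (n + 1) → α)
      = Function.update (symbolCount x) a (symbolCount x a + 1) := by
  funext b
  rw [Function.update_apply]
  simp only [symbolCount, card_filter, Fin.sum_univ_castSucc, Fin.snoc_castSucc, Fin.snoc_last]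
  split_ifs <;> simp_all

theorem natCast_symbolCount_eq_sum_range (y : ℕ → α) (n : ℕ) (a : α) :
    (symbolCount (fun ℓ : Fin n => y ℓ) a : ℝ) = ∑ ℓ ∈ range n, if y ℓ = a then (1 : ℝ) else 0 := by
  rw [symbolCount, natCast_card_filter,
    Fin.sum_univ_eq_sum_range (fun ℓ => if y ℓ = a then (1 : ℝ) else 0)]

variable [Fintype α]

theorem sum_symbolCount {n : ℕ} (x : Fin n → α) : ∑ a, symbolCount x a = n := by
  simp only [symbolCount, card_filter]
  rw [sum_comm]
  simp

theorem prod_comp_eq_prod_pow_symbolCount {M : Type*} [CommMonoid M] {n : ℕ} (f : α → M)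
    (x : Fin n → α) : ∏ ℓ, f (x ℓ) = ∏ a, f a ^ symbolCount x a := by
  rw [← prod_fiberwise' univ x f]
  simp [symbolCount]

end SymbolCount

theorem Nat.choose_add_le_exp_one_mul_pow (n r : ℕ) :
    ((n + r).choose r : ℝ) ≤ (Real.exp 1 * (1 + n / r)) ^ r := by
  rcases Nat.eq_zero_or_pos r with rfl | hr
  · simp
  have hr' : (0 : ℝ) < r := mod_cast hr
  calc ((n + r).choose r : ℝ) ≤ ((n + r : ℕ) : ℝ) ^ r / r ! := Nat.choose_le_pow_div r (n + r)
    _ = (1 + n / r) ^ r * ((r : ℝ) ^ r / r !) := by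
      rw [one_add_div hr'.ne', div_pow]
      push_cast
      field_simp
      ring
    _ ≤ (1 + n / r) ^ r * Real.exp r := by
      gcongr
      exact Real.pow_div_factorial_le_exp (r : ℝ) hr'.le r
    _ = (Real.exp 1 * (1 + n / r)) ^ r := by
      rw [mul_pow, ← Real.exp_nat_mul, mul_one, mul_comm]

section LaplaceMixture

variable {α : Type*} [Fintype α]

/-- The mass of every word with letter counts `c` under the Laplace mixture, i.e. the law of an
i.i.d. sequence whose parameter is drawn uniformly from the simplex of distributions on `α`. -/
noncomputable def laplaceMixture (c : α → ℕ) : ℝ :=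
  ((Fintype.card α - 1)! * ∏ a, (c a)! : ℕ) / (∑ a, c a + (Fintype.card α - 1))!

theorem laplaceMixture_nonneg (c : α → ℕ) : 0 ≤ laplaceMixture c := by
  unfold laplaceMixture
  positivity

theorem laplaceMixture_eq_inv (c : α → ℕ) :
    laplaceMixture c = ((Nat.multinomial univ c * ((∑ a, c a) + (Fintype.card α - 1)).choose
      (Fintype.card α - 1) : ℕ) : ℝ)⁻¹ := by
  have h := Nat.add_choose_mul_factorial_mul_factorial (∑ a, c a) (Fintype.card α - 1)
  rw [← Nat.multinomial_spec univ c] at h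
  unfold laplaceMixture
  rw [← h]
  have : (Nat.multinomial univ c : ℝ) ≠ 0 := mod_cast (Nat.multinomial_pos _ _).ne'
  push_cast
  field_simp

variable [DecidableEq α]

theorem laplaceMixture_update_succ [Nonempty α] (c : α → ℕ) (a : α) :
    laplaceMixture (Function.update c a (c a + 1))
      = laplaceMixture c * ((c a + 1) / ((∑ b, c b) + Fintype.card α)) := by
  have hcard := Fintype.card_pos (α := α)
  have hprod : ∏ b, (Function.update c a (c a + 1) b)! = (c a + 1) * ∏ b, (c b)! := by
    rw [Fintype.prod_eq_mul_prod_compl a, Fintype.prod_eq_mul_prod_compl a (fun b => (c b)!),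
      Function.update_self, Nat.factorial_succ, mul_assoc]
    congr 2
    exact prod_congr rfl fun b hb => by rw [Function.update_of_ne (by simpa using hb)]
  have hsum : ∑ b, Function.update c a (c a + 1) b = (∑ b, c b) + 1 := by
    rw [Fintype.sum_eq_add_sum_compl a, Fintype.sum_eq_add_sum_compl a c, Function.update_self,
      add_right_comm]
    congr 2
    exact sum_congr rfl fun b hb => by rw [Function.update_of_ne (by simpa using hb)]
  have hfac : (∑ b, c b + 1 + (Fintype.card α - 1))!
      = (∑ b, c b + Fintype.card α) * (∑ b, c b + (Fintype.card α - 1))! := by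
    rw [show ∑ b, c b + 1 + (Fintype.card α - 1) = ∑ b, c b + (Fintype.card α - 1) + 1 by omega,
      Nat.factorial_succ, show ∑ b, c b + (Fintype.card α - 1) + 1 = ∑ b, c b + Fintype.card α
        by omega]
  unfold laplaceMixture
  rw [hprod, hsum, hfac]
  push_cast
  field_simp

theorem sum_laplaceMixture_update_succ [Nonempty α] (c : α → ℕ) :
    ∑ a, laplaceMixture (Function.update c a (c a + 1)) = laplaceMixture c := by
  simp only [laplaceMixture_update_succ, ← mul_sum, ← sum_div]
  have : ∑ a, ((c a : ℝ) + 1) = (∑ b, c b : ℕ) + Fintype.card α := by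
    push_cast [sum_add_distrib]
    simp
  rw [this, div_self (by positivity), mul_one]

theorem sum_laplaceMixture_symbolCount_snoc [Nonempty α] {n : ℕ} (x : Fin n → α) :
    ∑ a, laplaceMixture (symbolCount (Fin.snoc x a : Fin (n + 1) → α))
      = laplaceMixture (symbolCount x) := by
  simp only [symbolCount_snoc, sum_laplaceMixture_update_succ]

theorem laplaceMixture_symbolCount_elim0 :
    laplaceMixture (symbolCount (Fin.elim0 : Fin 0 → α)) = 1 := by
  simp [laplaceMixture, symbolCount, Nat.factorial_ne_zero]

theorem Nat.multinomial_mul_prod_pow_le (c : α → ℕ) :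
    Nat.multinomial univ c * ∏ a, c a ^ c a ≤ (∑ a, c a) ^ ∑ a, c a := by
  rw [Finset.sum_pow_eq_sum_piAntidiag]
  exact single_le_sum (f := fun k => Nat.multinomial univ k * ∏ a, c a ^ k a)
    (fun _ _ => Nat.zero_le _) (by simp)

theorem prod_div_pow_le_laplaceMixture (c : α → ℕ) :
    ∏ a, ((c a : ℝ) / (∑ b, c b : ℕ)) ^ c a
      ≤ (Real.exp 1 * (1 + (∑ b, c b : ℕ) / (Fintype.card α - 1 : ℕ))) ^ (Fintype.card α - 1)
        * laplaceMixture c := by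
  set n := ∑ b, c b
  set r := Fintype.card α - 1
  have hL : laplaceMixture c = ((Nat.multinomial univ c * (n + r).choose r : ℕ) : ℝ)⁻¹ :=
    laplaceMixture_eq_inv c
  have hmult : (0 : ℝ) < Nat.multinomial univ c := mod_cast Nat.multinomial_pos _ _
  have hchoose : (0 : ℝ) < (n + r).choose r := mod_cast Nat.choose_pos (by omega)
  have hpow : (0 : ℝ) < (n : ℝ) ^ n := mod_cast Nat.pow_self_pos
  have htypes : ∏ a, ((c a : ℝ) / n) ^ c a ≤ (Nat.multinomial univ c : ℝ)⁻¹ := by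
    have hprod : ∏ a, ((c a : ℝ) / n) ^ c a = (∏ a, (c a : ℝ) ^ c a) / (n : ℝ) ^ n := by
      simp_rw [div_pow]
      rw [prod_div_distrib, prod_pow_eq_pow_sum]
    rw [hprod, div_le_iff₀ hpow, inv_mul_eq_div, le_div_iff₀ hmult, mul_comm]
    exact_mod_cast Nat.multinomial_mul_prod_pow_le c
  calc ∏ a, ((c a : ℝ) / n) ^ c a ≤ (Nat.multinomial univ c : ℝ)⁻¹ := htypes
    _ = (n + r).choose r * laplaceMixture c := by
      rw [hL]
      push_cast
      field_simp
    _ ≤ _ := mul_le_mul_of_nonneg_right (Nat.choose_add_le_exp_one_mul_pow n r)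
      (laplaceMixture_nonneg c)

end LaplaceMixture

section KL

noncomputable def klBoundary (d δ : ℝ) (n : ℕ) : ℝ :=
  Real.log (1 / δ) + d * Real.log (Real.exp 1 * (1 + n / d))

theorem exp_klBoundary {δ : ℝ} (hδ : 0 < δ) (r n : ℕ) :
    Real.exp (klBoundary r δ n) = (Real.exp 1 * (1 + n / r)) ^ r / δ := by
  rw [klBoundary, Real.exp_add, Real.exp_log (by positivity), Real.exp_nat_mul,
    Real.exp_log (by positivity)]
  ring

@[norm_cast]
theorem EReal.coe_finset_sum {ι : Type*} (s : Finset ι) (f : ι → ℝ) :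
    ((∑ i ∈ s, f i : ℝ) : EReal) = ∑ i ∈ s, (f i : EReal) :=
  map_sum (⟨⟨Real.toEReal, EReal.coe_zero⟩, EReal.coe_add⟩ : ℝ →+ EReal) f s

theorem KLdiv_eq_coe_sum {S : Type*} [Fintype S] {p q : S → ℝ} (h : ∀ s, p s ≠ 0 → q s ≠ 0) :
    KLdiv p q = ((∑ s, p s * Real.log (p s / q s) : ℝ) : EReal) := by
  rw [KLdiv, EReal.coe_finset_sum]
  refine sum_congr rfl fun s _ => ?_
  by_cases hs : p s = 0
  · simp [hs]
  · simp [hs, h s hs]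

variable {α : Type*} [Fintype α]

theorem exp_mul_sum_mul_log_mul_prod_pow (c : α → ℕ) {p : α → ℝ} (hp : ∀ a, c a ≠ 0 → 0 < p a) :
    Real.exp ((∑ b, c b : ℕ) * ∑ a, (c a / (∑ b, c b : ℕ) : ℝ)
        * Real.log ((c a / (∑ b, c b : ℕ) : ℝ) / p a)) * ∏ a, p a ^ c a
      = ∏ a, ((c a : ℝ) / (∑ b, c b : ℕ)) ^ c a := by
  rw [mul_sum, Real.exp_sum, ← prod_mul_distrib]
  refine prod_congr rfl fun a _ => ?_
  by_cases ha : c a = 0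
  · simp [ha]
  have hn : ((∑ b, c b : ℕ) : ℝ) ≠ 0 := Nat.cast_ne_zero.2 <| Nat.pos_iff_ne_zero.1 <|
    (Nat.pos_of_ne_zero ha).trans_le (single_le_sum (fun b _ => Nat.zero_le (c b)) (mem_univ a))
  have hq : 0 < (c a : ℝ) / (∑ b, c b : ℕ) / p a := by
    have := hp a ha
    positivity
  rw [← mul_assoc, mul_div_cancel₀ _ hn, ← Real.log_pow, Real.exp_log (pow_pos hq _), div_pow,
    div_mul_cancel₀ _ (pow_ne_zero _ (hp a ha).ne')]

variable [DecidableEq α] [Nonempty α]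

theorem prod_pow_le_mul_laplaceMixture_of_lt_mul_KLdiv (c : α → ℕ) {p : α → ℝ}
    (hp : ∀ a, 0 ≤ p a) {δ : ℝ} (hδ : 0 < δ)
    (h : (klBoundary (Fintype.card α - 1) δ (∑ b, c b) : EReal)
      < (((∑ b, c b : ℕ) : ℝ) : EReal) * KLdiv (fun a => (c a : ℝ) / (∑ b, c b : ℕ)) p) :
    ∏ a, p a ^ c a ≤ δ * laplaceMixture c := by
  by_cases hsupp : ∀ a, c a ≠ 0 → p a ≠ 0
  swap
  · obtain ⟨a, hca, hpa⟩ : ∃ a, c a ≠ 0 ∧ p a = 0 := by simpa using hsupp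
    rw [prod_eq_zero (mem_univ a) (by rw [hpa, zero_pow hca])]
    exact mul_nonneg hδ.le (laplaceMixture_nonneg c)
  have hexp := exp_mul_sum_mul_log_mul_prod_pow c fun a ha => (hp a).lt_of_ne' (hsupp a ha)
  have hbound := prod_div_pow_le_laplaceMixture c
  rw [← Nat.cast_pred Fintype.card_pos,
    KLdiv_eq_coe_sum fun a ha => hsupp a fun h => ha (by simp [h]),
    ← EReal.coe_mul, EReal.coe_lt_coe_iff, ← Real.exp_lt_exp, exp_klBoundary hδ] at h
  set B := (Real.exp 1 * (1 + ((∑ b, c b : ℕ) : ℝ) / (Fintype.card α - 1 : ℕ)))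
    ^ (Fintype.card α - 1)
  have hB : 0 < B := by positivity
  have key : B * ((∏ a, p a ^ c a) / δ) ≤ B * laplaceMixture c :=
    calc B * ((∏ a, p a ^ c a) / δ) = B / δ * ∏ a, p a ^ c a := by ring
      _ ≤ _ * ∏ a, p a ^ c a := by gcongr; exact prod_nonneg fun a _ => pow_nonneg (hp a) _
      _ = ∏ a, ((c a : ℝ) / (∑ b, c b : ℕ)) ^ c a := hexp
      _ ≤ B * laplaceMixture c := hbound
  exact (div_le_iff₀' hδ).1 (le_of_mul_le_mul_left key hB)

theorem prod_le_mul_laplaceMixture_of_lt_mul_KLdiv (y : ℕ → α) (n : ℕ) {p : α → ℝ}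
    (hp : ∀ a, 0 ≤ p a) {δ : ℝ} (hδ : 0 < δ)
    (h : (klBoundary (Fintype.card α - 1) δ n : EReal) < ((n : ℝ) : EReal)
        * KLdiv (fun a => (∑ ℓ ∈ range n, if y ℓ = a then (1 : ℝ) else 0) / n) p) :
    ∏ ℓ : Fin n, p (y ℓ) ≤ δ * laplaceMixture (symbolCount fun ℓ : Fin n => y ℓ) := by
  rw [prod_comp_eq_prod_pow_symbolCount]
  refine prod_pow_le_mul_laplaceMixture_of_lt_mul_KLdiv _ hp hδ ?_
  simpa only [sum_symbolCount, natCast_symbolCount_eq_sum_range] using h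

end KL

theorem ProbabilityTheory.iIndepFun.measure_mem_finset {Ω ι α : Type*} [MeasurableSpace Ω]
    {μ : Measure Ω} [IsProbabilityMeasure μ] [Fintype ι] [MeasurableSpace α]
    [MeasurableSingletonClass α] {f : ι → Ω → α} (hf : ∀ i, Measurable (f i))
    (hindep : iIndepFun f μ) (A : Finset (ι → α)) :
    μ {ω | (fun i => f i ω) ∈ A} = ∑ x ∈ A, ∏ i, μ (f i ⁻¹' {x i}) := by
  have hmeas : Measurable fun ω i => f i ω := measurable_pi_lambda _ hf
  rw [show {ω | (fun i => f i ω) ∈ A} = (fun ω i => f i ω) ⁻¹' A from rfl,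
    ← Measure.map_apply hmeas A.measurableSet,
    (iIndepFun_iff_map_fun_eq_pi_map fun i => (hf i).aemeasurable).1 hindep,
    ← sum_measure_singleton]
  refine sum_congr rfl fun x _ => ?_
  rw [Measure.pi_singleton]
  exact prod_congr rfl fun i _ => Measure.map_apply (hf i) (measurableSet_singleton _)

theorem measure_samples_mem_finset {Ω α : Type*} [MeasurableSpace Ω] {μ : Measure Ω}
    [IsProbabilityMeasure μ] [Fintype α] [MeasurableSpace α] [MeasurableSingletonClass α]
    {X : ℕ → Ω → α} (hX : ∀ t, Measurable (X t)) (hindep : iIndepFun X μ) {p : α → ℝ}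
    (hp : ∀ a, 0 ≤ p a) (hlaw : ∀ t a, μ {ω | X t ω = a} = ENNReal.ofReal (p a)) {N : ℕ}
    (A : Finset (Fin N → α)) :
    μ {ω | (fun ℓ : Fin N => X ℓ ω) ∈ A} = ENNReal.ofReal (∑ x ∈ A, ∏ ℓ, p (x ℓ)) := by
  rw [(hindep.precomp Fin.val_injective).measure_mem_finset (fun ℓ : Fin N => hX ℓ),
    ENNReal.ofReal_sum_of_nonneg fun x _ => prod_nonneg fun ℓ _ => hp _]
  refine sum_congr rfl fun x _ => ?_
  rw [ENNReal.ofReal_prod_of_nonneg fun ℓ _ => hp _]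
  exact prod_congr rfl fun ℓ _ => hlaw ℓ (x ℓ)

theorem MeasureTheory.measure_setOf_exists_le_of_forall {Ω : Type*} [MeasurableSpace Ω]
    {μ : Measure Ω} {D : ℕ → Ω → Prop} {c : ENNReal}
    (h : ∀ N, μ {ω | ∃ n ≤ N, D n ω} ≤ c) : μ {ω | ∃ n, D n ω} ≤ c := by
  have hunion : {ω | ∃ n, D n ω} = ⋃ N, {ω | ∃ n ≤ N, D n ω} :=
    Set.ext fun ω => ⟨fun ⟨n, hn⟩ => Set.mem_iUnion.2 ⟨n, n, le_rfl, hn⟩,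
      fun h => let ⟨_, n, _, hn⟩ := Set.mem_iUnion.1 h; ⟨n, hn⟩⟩
  have hmono : Monotone fun N => {ω | ∃ n ≤ N, D n ω} :=
    fun _ _ hNN' _ ⟨n, hn, hD⟩ => ⟨n, hn.trans hNN', hD⟩
  rw [hunion, hmono.measure_iUnion]
  exact iSup_le h

theorem kl_deviation_categorical_general
    {Ω : Type*} [MeasurableSpace Ω] (μ : Measure Ω) [IsProbabilityMeasure μ]
    (m : ℕ)
    (p : Fin m → ℝ) (hp : ∀ k, 0 ≤ p k) (hpsum : ∑ k, p k = 1)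
    (X : ℕ → Ω → Fin m) (hXmeas : ∀ t, Measurable (X t))
    (hindep : iIndepFun X μ)
    (hlaw : ∀ t k, μ {ω | X t ω = k} = ENNReal.ofReal (p k))
    (δ : ℝ) (hδ : 0 < δ) :
    μ {ω | ∃ n : ℕ, 1 ≤ n ∧
        (((n : ℝ) : EReal) *
            KLdiv
              (fun k => (∑ ℓ ∈ Finset.range n, if X ℓ ω = k then (1 : ℝ) else 0) / n) p
          > ((Real.log (1 / δ)
              + ((m : ℝ) - 1) * Real.log (Real.exp 1 * (1 + (n : ℝ) / ((m : ℝ) - 1))) : ℝ)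
                : EReal))}
      ≤ ENNReal.ofReal δ := by
  classical
  have : Nonempty (Fin m) := ⟨X 0 (nonempty_of_isProbabilityMeasure μ).some⟩
  set P : (n : ℕ) → (Fin n → Fin m) → ℝ := fun _ x => ∏ ℓ, p (x ℓ)
  set Q : (n : ℕ) → (Fin n → Fin m) → ℝ := fun _ x => laplaceMixture (symbolCount x)
  have hville (N : ℕ) : ∑ x ∈ univ.filter (RatioReaches P Q δ), P N x ≤ δ :=
    sum_filter_ratioReaches_le (fun _ x => (Fin.sum_prod_snoc hpsum x).le)
      (fun _ x => (sum_laplaceMixture_symbolCount_snoc x).le)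
      laplaceMixture_symbolCount_elim0.le (fun _ _ => laplaceMixture_nonneg _) hδ.le N
  refine measure_setOf_exists_le_of_forall fun N =>
    le_trans (measure_mono fun ω ⟨n, hnN, _, hdev⟩ => ?_)
      ((measure_samples_mem_finset hXmeas hindep hp hlaw _).trans_le
        (ENNReal.ofReal_le_ofReal (hville N)))
  exact mem_filter.2 ⟨mem_univ _, n, hnN, prod_le_mul_laplaceMixture_of_lt_mul_KLdiv
    (fun ℓ => X ℓ ω) n hp hδ (by rw [Fintype.card_fin]; exact hdev)⟩

/-- time-uniform deviation inequality for the KL divergence between the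
empirical distribution of i.i.d. categorical samples and the true distribution.
The samples are `X 0, X 1, …` (so the first `n` samples are `X ℓ` for `ℓ < n`), each with
law `p` on `{1, …, m}` (modeled as `Fin m`), mutually independent. -/
theorem kl_deviation_categorical
    {Ω : Type*} [MeasurableSpace Ω] (μ : Measure Ω) [IsProbabilityMeasure μ]
    (m : ℕ) (hm : 2 ≤ m)
    (p : Fin m → ℝ) (hp : ∀ k, 0 ≤ p k) (hpsum : ∑ k, p k = 1)
    (X : ℕ → Ω → Fin m) (hXmeas : ∀ t, Measurable (X t))
    (hindep : iIndepFun X μ)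
    (hlaw : ∀ t k, μ {ω | X t ω = k} = ENNReal.ofReal (p k))
    (δ : ℝ) (hδ : 0 < δ) (hδ1 : δ ≤ 1) :
    μ {ω | ∃ n : ℕ, 1 ≤ n ∧
        (((n : ℝ) : EReal) *
            KLdiv
              (fun k => (∑ ℓ ∈ Finset.range n, if X ℓ ω = k then (1 : ℝ) else 0) / n) p
          > ((Real.log (1 / δ)
              + ((m : ℝ) - 1) * Real.log (Real.exp 1 * (1 + (n : ℝ) / ((m : ℝ) - 1))) : ℝ)
                : EReal))}
      ≤ ENNReal.ofReal δ :=
  kl_deviation_categorical_general μ m p hp hpsum X hXmeas hindep hlaw δ hδ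
end

section
/- Let (F_t)_{t∈ℕ} be a filtration and let (X_t)_{t≥1} be a sequence of {0,1}-valued random variables such that X_t is F_t-measurable and P(X_t = 1 | F_{t−1}) = P_t, where P_t is F_{t−1}-measurable and takes values in [0,1]. Then for every δ > 0, P( ∃ n : Σ_{t=1}^n X_t < (1/2) Σ_{t=1}^n P_t − log(1/δ) ) ≤ δ. -/
/-!
Since `X t ∈ {0,1}`, `exp (-X t) = 1 - X t + X t e⁻¹` is affine in `X t`, so its
conditional expectation given `ℱ (t-1)` is `1 - P t + P t e⁻¹`. Dividing by it makes the
running product of the factors `exp (-X t) / (1 - P t + P t e⁻¹)` a nonnegative martingale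
with mean one, and Ville's inequality bounds the probability that it ever reaches `1/δ` by `δ`.
Since `1 - P t + P t e⁻¹ ≤ exp (-(1 - e⁻¹) P t) ≤ exp (-P t / 2)`, the product dominates
`exp (∑ (P t / 2 - X t))`, which exceeds `1/δ` on the deviation event.
-/

open Finset MeasureTheory

namespace MeasureTheory

variable {Ω : Type*} {m0 : MeasurableSpace Ω} {μ : Measure Ω} [IsFiniteMeasure μ]
  {ℱ : Filtration ℕ m0} {f : ℕ → Ω → ℝ}

theorem Martingale.integral_eq_integral_zero (hf : Martingale f ℱ μ) (n : ℕ) :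
    ∫ ω, f n ω ∂μ = ∫ ω, f 0 ω ∂μ := by
  rw [← integral_condExp (ℱ.le 0)]
  exact integral_congr_ae (hf.condExp_ae_eq (Nat.zero_le n))

/-- Ville's inequality. -/
theorem Martingale.measure_exists_ge_le (hf : Martingale f ℱ μ) (hnonneg : 0 ≤ f) {ε : ℝ}
    (hε : 0 < ε) :
    μ {ω | ∃ n, ε ≤ f n ω} ≤ ENNReal.ofReal ((∫ ω, f 0 ω ∂μ) / ε) := by
  set A : ℕ → Set Ω := fun n => {ω | ∃ k ≤ n, ε ≤ f k ω}
  have hA : ∀ n, μ (A n) ≤ ENNReal.ofReal ((∫ ω, f 0 ω ∂μ) / ε) := by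
    intro n
    have hmax := maximal_ineq hf.submartingale hnonneg (ε := ε.toNNReal) n
    have hset : {ω | (ε.toNNReal : ℝ) ≤ (range (n + 1)).sup' nonempty_range_add_one
        fun k => f k ω} = A n := by
      ext ω
      simp [A, Real.coe_toNNReal _ hε.le, le_sup'_iff]
    rw [hset] at hmax
    have hint : ∫ ω in A n, f n ω ∂μ ≤ ∫ ω, f 0 ω ∂μ :=
      (setIntegral_le_integral (hf.integrable n) (ae_of_all _ (hnonneg n))).trans_eq
        (hf.integral_eq_integral_zero n)
    rw [ENNReal.ofReal_div_of_pos hε, ENNReal.le_div_iff_mul_le (by simp [hε]) (by simp),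
      mul_comm]
    exact hmax.trans (ENNReal.ofReal_le_ofReal hint)
  have hmono : Monotone A := fun m n hmn ω ⟨k, hk, hkω⟩ => ⟨k, hk.trans hmn, hkω⟩
  calc μ {ω | ∃ n, ε ≤ f n ω} ≤ μ (⋃ n, A n) :=
        measure_mono fun ω ⟨n, hn⟩ => Set.mem_iUnion.2 ⟨n, n, le_rfl, hn⟩
    _ = ⨆ n, μ (A n) := hmono.measure_iUnion
    _ ≤ _ := iSup_le hA

theorem martingale_prod_Icc_of_condExp_eq_one {Y : ℕ → Ω → ℝ}
    (hY : ∀ t, 1 ≤ t → StronglyMeasurable[ℱ t] (Y t))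
    (hbdd : ∀ t, ∃ C, ∀ ω, ‖Y (t + 1) ω‖ ≤ C)
    (hcond : ∀ t, μ[Y (t + 1) | ℱ t] =ᵐ[μ] 1) :
    Martingale (fun n => ∏ t ∈ Icc 1 n, Y t) ℱ μ := by
  have hsucc : ∀ n, ∏ t ∈ Icc 1 (n + 1), Y t = (∏ t ∈ Icc 1 n, Y t) * Y (n + 1) :=
    fun n => prod_Icc_succ_top (by omega) Y
  have hYaesm : ∀ t, 1 ≤ t → AEStronglyMeasurable (Y t) μ := fun t ht =>
    ((hY t ht).mono (ℱ.le t)).aestronglyMeasurable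
  have hadapted : StronglyAdapted ℱ fun n => ∏ t ∈ Icc 1 n, Y t := fun n =>
    stronglyMeasurable_prod _ fun t ht =>
      (hY t (mem_Icc.1 ht).1).mono (ℱ.mono (mem_Icc.1 ht).2)
  have hint : ∀ n, Integrable (∏ t ∈ Icc 1 n, Y t) μ := by
    intro n
    induction n with
    | zero => exact integrable_const (1 : ℝ)
    | succ n ih =>
      obtain ⟨C, hC⟩ := hbdd n
      rw [hsucc]
      exact ih.mul_bdd (hYaesm _ (by omega)) (ae_of_all _ hC)
  refine martingale_nat hadapted hint fun n => ?_
  obtain ⟨C, hC⟩ := hbdd n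
  have hY' : Integrable (Y (n + 1)) μ := .of_bound (hYaesm _ (by omega)) C (ae_of_all _ hC)
  rw [hsucc]
  filter_upwards [condExp_mul_of_stronglyMeasurable_left (hadapted n) (hsucc n ▸ hint (n + 1))
    hY', hcond n] with ω hprod hY1
  simp [hprod, hY1]

end MeasureTheory

namespace ProbabilityTheory

noncomputable def bernoulliMgfNegOne (p : ℝ) : ℝ := 1 - p + p * Real.exp (-1)

noncomputable def bernoulliExpTilt (x p : ℝ) : ℝ := Real.exp (-x) / bernoulliMgfNegOne p

theorem exp_neg_one_le_bernoulliMgfNegOne {p : ℝ} (hp : p ∈ Set.Icc (0 : ℝ) 1) :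
    Real.exp (-1) ≤ bernoulliMgfNegOne p := by
  have : Real.exp (-1) ≤ 1 := Real.exp_le_one_iff.2 (by norm_num)
  unfold bernoulliMgfNegOne
  nlinarith [hp.2]

theorem bernoulliMgfNegOne_pos {p : ℝ} (hp : p ∈ Set.Icc (0 : ℝ) 1) :
    0 < bernoulliMgfNegOne p :=
  (Real.exp_pos _).trans_le (exp_neg_one_le_bernoulliMgfNegOne hp)

theorem bernoulliMgfNegOne_le_exp {p : ℝ} (hp : 0 ≤ p) :
    bernoulliMgfNegOne p ≤ Real.exp (-(p / 2)) := by
  have := Real.add_one_le_exp (-(p * (1 - Real.exp (-1))))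
  have := Real.exp_le_exp.2 (show -(p * (1 - Real.exp (-1))) ≤ -(p / 2) by
    nlinarith [Real.exp_neg_one_lt_half])
  unfold bernoulliMgfNegOne
  linarith

theorem exp_neg_eq_bernoulliMgfNegOne {x : ℝ} (hx : x = 0 ∨ x = 1) :
    Real.exp (-x) = bernoulliMgfNegOne x := by
  rcases hx with rfl | rfl <;> simp [bernoulliMgfNegOne]

theorem bernoulliExpTilt_nonneg {x p : ℝ} (hp : p ∈ Set.Icc (0 : ℝ) 1) :
    0 ≤ bernoulliExpTilt x p :=
  div_nonneg (Real.exp_pos _).le (bernoulliMgfNegOne_pos hp).le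

theorem bernoulliExpTilt_le_exp_one {x p : ℝ} (hx : 0 ≤ x) (hp : p ∈ Set.Icc (0 : ℝ) 1) :
    bernoulliExpTilt x p ≤ Real.exp 1 := by
  calc bernoulliExpTilt x p ≤ 1 / Real.exp (-1) :=
        div_le_div₀ zero_le_one (Real.exp_le_one_iff.2 (by linarith)) (Real.exp_pos _)
          (exp_neg_one_le_bernoulliMgfNegOne hp)
    _ = Real.exp 1 := by rw [Real.exp_neg, one_div, inv_inv]

theorem exp_sub_le_bernoulliExpTilt {x p : ℝ} (hp : p ∈ Set.Icc (0 : ℝ) 1) :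
    Real.exp (p / 2 - x) ≤ bernoulliExpTilt x p := by
  rw [bernoulliExpTilt, le_div_iff₀ (bernoulliMgfNegOne_pos hp)]
  calc Real.exp (p / 2 - x) * bernoulliMgfNegOne p
      ≤ Real.exp (p / 2 - x) * Real.exp (-(p / 2)) := by
        gcongr; exact bernoulliMgfNegOne_le_exp hp.1
    _ = Real.exp (-x) := by rw [← Real.exp_add]; ring_nf

theorem exp_sum_sub_le_prod_bernoulliExpTilt {ι : Type*} (s : Finset ι) {x p : ι → ℝ}
    (hp : ∀ i, p i ∈ Set.Icc (0 : ℝ) 1) :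
    Real.exp (∑ i ∈ s, (p i / 2 - x i)) ≤ ∏ i ∈ s, bernoulliExpTilt (x i) (p i) := by
  rw [Real.exp_sum]
  exact prod_le_prod (fun i _ => (Real.exp_pos _).le) fun i _ => exp_sub_le_bernoulliExpTilt (hp i)

theorem _root_.Measurable.bernoulliExpTilt {α : Type*} {m : MeasurableSpace α} {f g : α → ℝ}
    (hf : Measurable f) (hg : Measurable g) : Measurable fun a => bernoulliExpTilt (f a) (g a) := by
  unfold ProbabilityTheory.bernoulliExpTilt bernoulliMgfNegOne
  fun_prop

theorem condExp_exp_neg_ae_eq {Ω : Type*} {m m0 : MeasurableSpace Ω} {μ : Measure Ω}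
    [IsFiniteMeasure μ] (hm : m ≤ m0) {X : Ω → ℝ} (hX01 : ∀ ω, X ω = 0 ∨ X ω = 1)
    (hX : AEStronglyMeasurable X μ) :
    μ[fun ω => Real.exp (-X ω) | m] =ᵐ[μ] fun ω => bernoulliMgfNegOne (μ[X | m] ω) := by
  have hXint : Integrable X μ := .of_bound hX 1 (ae_of_all _ fun ω => by
    rcases hX01 ω with h | h <;> simp [h])
  have haffine :
      (fun ω => Real.exp (-X ω)) = (fun _ => (1 : ℝ)) + (Real.exp (-1) - 1) • X := by
    ext ω
    rw [exp_neg_eq_bernoulliMgfNegOne (hX01 ω), bernoulliMgfNegOne]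
    simp only [Pi.add_apply, Pi.smul_apply, smul_eq_mul]
    ring
  rw [haffine]
  filter_upwards [condExp_add (integrable_const _) (hXint.smul (Real.exp (-1) - 1)) m,
    condExp_smul (Real.exp (-1) - 1) X m] with ω hadd hsmul
  rw [hadd, Pi.add_apply, hsmul, condExp_const hm, bernoulliMgfNegOne]
  simp only [Pi.smul_apply, smul_eq_mul]
  ring

theorem condExp_bernoulliExpTilt_ae_eq_one {Ω : Type*} {m m0 : MeasurableSpace Ω}
    {μ : Measure Ω} [IsFiniteMeasure μ] (hm : m ≤ m0) {X P : Ω → ℝ}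
    (hX01 : ∀ ω, X ω = 0 ∨ X ω = 1)
    (hX : AEStronglyMeasurable X μ) (hP : StronglyMeasurable[m] P)
    (hP01 : ∀ ω, P ω ∈ Set.Icc (0 : ℝ) 1) (hcond : μ[X | m] =ᵐ[μ] P) :
    μ[fun ω => bernoulliExpTilt (X ω) (P ω) | m] =ᵐ[μ] 1 := by
  set D : Ω → ℝ := fun ω => (bernoulliMgfNegOne (P ω))⁻¹
  have hD : StronglyMeasurable[m] D := by
    refine Measurable.stronglyMeasurable ?_
    unfold D bernoulliMgfNegOne
    fun_prop
  have hE : Integrable (fun ω => Real.exp (-X ω)) μ :=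
    .of_bound (by fun_prop) 1 (ae_of_all _ fun ω => by
      rcases hX01 ω with h | h <;> simp [h])
  have hDE : Integrable (D * fun ω => Real.exp (-X ω)) μ :=
    hE.bdd_mul (c := Real.exp 1) (hD.mono hm).aestronglyMeasurable (ae_of_all _ fun ω => by
      have hpos := bernoulliMgfNegOne_pos (hP01 ω)
      rw [Real.norm_of_nonneg (inv_nonneg.2 hpos.le), ← inv_inv (Real.exp 1), ← Real.exp_neg]
      exact inv_anti₀ (Real.exp_pos _) (exp_neg_one_le_bernoulliMgfNegOne (hP01 ω)))
  have hfactor : (fun ω => bernoulliExpTilt (X ω) (P ω)) = D * fun ω => Real.exp (-X ω) := by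
    ext ω; simp [D, bernoulliExpTilt, div_eq_inv_mul]
  rw [hfactor]
  filter_upwards [condExp_mul_of_stronglyMeasurable_left hD hDE hE,
    condExp_exp_neg_ae_eq hm hX01 hX, hcond] with ω hpull hexp hXP
  rw [hpull, Pi.mul_apply, hexp, hXP]
  exact inv_mul_cancel₀ (bernoulliMgfNegOne_pos (hP01 ω)).ne'

theorem martingale_prod_bernoulliExpTilt {Ω : Type*} {m0 : MeasurableSpace Ω} {μ : Measure Ω}
    [IsFiniteMeasure μ] (ℱ : Filtration ℕ m0) {X P : ℕ → Ω → ℝ}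
    (hX01 : ∀ t ω, X t ω = 0 ∨ X t ω = 1)
    (hXadapted : ∀ t, 1 ≤ t → StronglyMeasurable[ℱ t] (X t))
    (hPpred : ∀ t, 1 ≤ t → StronglyMeasurable[ℱ (t - 1)] (P t))
    (hP01 : ∀ t ω, P t ω ∈ Set.Icc (0 : ℝ) 1)
    (hcond : ∀ t, 1 ≤ t → μ[X t | ℱ (t - 1)] =ᵐ[μ] P t) :
    Martingale (fun n => ∏ t ∈ Icc 1 n, fun ω => bernoulliExpTilt (X t ω) (P t ω)) ℱ μ := by
  refine martingale_prod_Icc_of_condExp_eq_one (fun t ht => ?_)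
    (fun t => ⟨Real.exp 1, fun ω => ?_⟩) fun t => ?_
  · exact ((hXadapted t ht).measurable.bernoulliExpTilt
      ((hPpred t ht).mono (ℱ.mono (Nat.sub_le t 1))).measurable).stronglyMeasurable
  · rw [Real.norm_of_nonneg (bernoulliExpTilt_nonneg (hP01 _ ω))]
    exact bernoulliExpTilt_le_exp_one (by rcases hX01 (t + 1) ω with h | h <;> simp [h])
      (hP01 _ ω)
  · have hsucc : 1 ≤ t + 1 := by omega
    exact condExp_bernoulliExpTilt_ae_eq_one (ℱ.le t) (hX01 (t + 1))
      ((hXadapted _ hsucc).mono (ℱ.le _)).aestronglyMeasurable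
      (by simpa using hPpred _ hsucc) (hP01 _) (by simpa using hcond _ hsucc)

end ProbabilityTheory

open ProbabilityTheory

/-- time-uniform lower deviation bound for a sum of Bernoulli random
variables with predictable conditional success probabilities. `X t` takes values in
`{0,1}`, is `ℱ t`-measurable, and its conditional success probability given `ℱ (t-1)`
is `P t` (encoded, since `X t ∈ {0,1}`, as `E[X t | ℱ (t−1)] = P t`), where `P t` is
`ℱ (t-1)`-measurable with values in `[0,1]`. -/
theorem bernoulli_sequence_deviation
    {Ω : Type*} {m0 : MeasurableSpace Ω} (μ : Measure Ω) [IsProbabilityMeasure μ]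
    (ℱ : Filtration ℕ m0)
    (X P : ℕ → Ω → ℝ)
    (hX01 : ∀ t ω, X t ω = 0 ∨ X t ω = 1)
    (hXadapted : ∀ t, 1 ≤ t → StronglyMeasurable[ℱ t] (X t))
    (hPpred : ∀ t, 1 ≤ t → StronglyMeasurable[ℱ (t - 1)] (P t))
    (hP01 : ∀ t ω, P t ω ∈ Set.Icc (0 : ℝ) 1)
    (hcond : ∀ t, 1 ≤ t → μ[X t | ℱ (t - 1)] =ᵐ[μ] P t)
    (δ : ℝ) (hδ : 0 < δ) :
    μ {ω | ∃ n : ℕ,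
        ∑ t ∈ Finset.Icc 1 n, X t ω
          < (∑ t ∈ Finset.Icc 1 n, P t ω) / 2 - Real.log (1 / δ)}
      ≤ ENNReal.ofReal δ := by
  set M : ℕ → Ω → ℝ := fun n =>
    ∏ t ∈ Icc 1 n, fun ω => bernoulliExpTilt (X t ω) (P t ω)
  have hM : Martingale M ℱ μ :=
    martingale_prod_bernoulliExpTilt ℱ hX01 hXadapted hPpred hP01 hcond
  have hM0 : 0 ≤ M := fun n ω => by
    simpa [M, prod_apply] using
      prod_nonneg fun t _ => bernoulliExpTilt_nonneg (x := X t ω) (hP01 t ω)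
  have hdev : {ω | ∃ n : ℕ,
      ∑ t ∈ Icc 1 n, X t ω < (∑ t ∈ Icc 1 n, P t ω) / 2 - Real.log (1 / δ)}
        ⊆ {ω | ∃ n, 1 / δ ≤ M n ω} := by
    rintro ω ⟨n, hn⟩
    refine ⟨n, ?_⟩
    calc 1 / δ = Real.exp (Real.log (1 / δ)) := (Real.exp_log (by positivity)).symm
      _ ≤ Real.exp (∑ t ∈ Icc 1 n, (P t ω / 2 - X t ω)) := by
        gcongr
        rw [sum_sub_distrib, ← sum_div]
        linarith
      _ ≤ M n ω := by
        simpa [M, prod_apply] using exp_sum_sub_le_prod_bernoulliExpTilt _ (hP01 · ω)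
  calc _ ≤ μ {ω | ∃ n, 1 / δ ≤ M n ω} := measure_mono hdev
    _ ≤ ENNReal.ofReal ((∫ ω, M 0 ω ∂μ) / (1 / δ)) :=
        hM.measure_exists_ge_le hM0 (by positivity)
    _ = ENNReal.ofReal δ := by simp [M]
end

section
/- Let (F_t)_{t∈ℕ} be a filtration, (Y_t)_{t≥1} an adapted sequence of random variables with |Y_t| ≤ b and E[Y_t | F_{t−1}] = 0, and (w_t)_{t≥1} a predictable sequence of weights with w_t ∈ [0,1]. Set S_t = Σ_{s=1}^t w_s Y_s and V_t = Σ_{s=1}^t w_s² E[Y_s² | F_{s−1}]. Then for every δ > 0, with probability at least 1 − δ, simultaneously for all t ≥ 1: |S_t| ≤ √( 2 V_t log(4e(2t+1)/δ) ) + 3 b log(4e(2t+1)/δ). -/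
open Finset MeasureTheory

/-!
For `0 ≤ λ ≤ 1/b`, the bound `exp z ≤ 1 + z + (1/2 + 2x/9) z²` for `|z| ≤ x ≤ 1` makes
`exp (λ S_k - (1/2 + 2λb/9) λ² V_k)` a nonnegative supermartingale starting at `1`, so by Ville's
maximal inequality it ever exceeds `e^A` with probability at most `e^{-A}`. Doing this for `±S`
at the scales `λ_n = 1/(b(n+1))` with `A_n = log (4e(12n²+1)/δ)` costs at most `δ` in total.
Off that exceptional set, at time `t` the largest `λ_n` below the optimal scale `√(2 L_t / V_t)`
has `A_n ≤ L_t = log (4e(2t+1)/δ)` because `V_t ≤ t b²`, and the crossing inequality at that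
scale rearranges to the stated bound.
-/

theorem Real.exp_le_one_add_add_mul_sq {z x : ℝ} (hz : |z| ≤ x) (hx : x ≤ 1) :
    Real.exp z ≤ 1 + z + (1 / 2 + 2 / 9 * x) * z ^ 2 := by
  have h := abs_sub_le_iff.mp (Real.exp_bound (hz.trans hx) (n := 3) (by norm_num))
  have hcube : |z| ^ 3 ≤ x * z ^ 2 := by
    rw [pow_succ, sq_abs, mul_comm]
    exact mul_le_mul_of_nonneg_right hz (sq_nonneg z)
  norm_num [Finset.sum_range_succ, Nat.factorial] at h
  nlinarith [h.1]

theorem le_of_crossing_bound_at_scale {a L r d A s : ℝ} (ha : 0 ≤ a) (hL : 0 ≤ L) (hr : 0 ≤ r)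
    (hd : 0 < d) (hrd : r ≤ d) (hdr : d ≤ r + a) (hA : A ≤ L)
    (h : d⁻¹ * s - (1 / 2 + 2 / 9 * (d⁻¹ * a)) * d⁻¹ ^ 2 * (2 * L * r ^ 2) ≤ A) :
    s ≤ 2 * L * r + 3 * a * L := by
  set u := r / d
  have hu0 : 0 ≤ u := div_nonneg hr hd.le
  have hu1 : u ≤ 1 := div_le_one_of_le₀ hrd hd.le
  have hs : s ≤ d * A + L * r * u + 4 / 9 * a * L * u ^ 2 := by
    have := mul_le_mul_of_nonneg_left h hd.le
    have hdu : r = d * u := by simp only [u]; field_simp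
    rw [hdu] at this ⊢
    field_simp at this
    nlinarith
  nlinarith [mul_le_mul_of_nonneg_left hA hd.le, mul_le_mul_of_nonneg_left hdr hL,
    mul_le_mul_of_nonneg_left hu1 (mul_nonneg hL hr),
    mul_le_mul_of_nonneg_left (pow_le_one₀ hu0 hu1 : u ^ 2 ≤ 1) (mul_nonneg ha hL)]

theorem le_sqrt_add_of_crossing_bound_on_grid {a L V s : ℝ} {t : ℕ} {A : ℕ → ℝ} (ha : 0 < a)
    (hL : 3 ≤ L) (hV : 0 ≤ V) (hVt : V ≤ t * a ^ 2)
    (hA : ∀ n : ℕ, 12 * (n : ℝ) ^ 2 ≤ 2 * t → A n ≤ L)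
    (h : ∀ n : ℕ, (a * (n + 1))⁻¹ * s
      - (1 / 2 + 2 / 9 * ((a * (n + 1))⁻¹ * a)) * (a * (n + 1))⁻¹ ^ 2 * V ≤ A n) :
    s ≤ √(2 * V * L) + 3 * a * L := by
  -- `1 / r` is the scale optimising the bound, and `a * (n + 1)` is the grid point just above `r`
  set r := √(V / (2 * L))
  have hr0 : 0 ≤ r := Real.sqrt_nonneg _
  have hVr : V = 2 * L * r ^ 2 := by
    rw [Real.sq_sqrt (by positivity)]; field_simp
  have hsqrt : √(2 * V * L) = 2 * L * r := by
    rw [hVr, show 2 * (2 * L * r ^ 2) * L = (2 * L * r) ^ 2 by ring, Real.sqrt_sq (by positivity)]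
  set n := ⌊r / a⌋₊
  have hn : a * n ≤ r := (le_div_iff₀' ha).mp (Nat.floor_le (by positivity))
  have hn1 : r < a * (n + 1) := (div_lt_iff₀' ha).mp (Nat.lt_floor_add_one _)
  have hnt : 12 * (n : ℝ) ^ 2 ≤ 2 * t := by
    have : 2 * L * (a * n) ^ 2 ≤ t * a ^ 2 := by
      nlinarith [pow_le_pow_left₀ (by positivity) hn 2]
    nlinarith [sq_nonneg (n : ℝ), pow_pos ha 2]
  rw [hsqrt]
  rw [hVr] at h
  exact le_of_crossing_bound_at_scale ha.le (by linarith) hr0 (by positivity) hn1.le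
    (by linarith) (hA n hnt) (h n)

theorem three_le_log_four_mul_exp_one_mul_div {t : ℕ} (ht : 1 ≤ t) {δ : ℝ} (hδ : 0 < δ)
    (hδ1 : δ ≤ 1) : 3 ≤ Real.log (4 * Real.exp 1 * (2 * t + 1) / δ) := by
  have ht' : (1 : ℝ) ≤ t := by exact_mod_cast ht
  have he : Real.exp 1 * Real.exp 1 ≤ 12 := by
    nlinarith [Real.exp_one_lt_d9, Real.exp_pos 1]
  have he0 := Real.exp_pos 1
  rw [Real.le_log_iff_exp_le (by positivity), le_div_iff₀ hδ,
    show (3 : ℝ) = 1 + 1 + 1 by norm_num, Real.exp_add, Real.exp_add]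
  nlinarith [mul_le_mul_of_nonneg_left hδ1
    (by positivity : 0 ≤ Real.exp 1 * Real.exp 1 * Real.exp 1)]

theorem le_sqrt_add_log_of_crossing_bound_on_grid {a δ V s : ℝ} {t : ℕ} (ha : 0 < a)
    (ht : 1 ≤ t) (hδ : 0 < δ) (hδ1 : δ ≤ 1) (hV : 0 ≤ V) (hVt : V ≤ t * a ^ 2)
    (h : ∀ n : ℕ, (a * (n + 1))⁻¹ * s
      - (1 / 2 + 2 / 9 * ((a * (n + 1))⁻¹ * a)) * (a * (n + 1))⁻¹ ^ 2 * V
        ≤ Real.log (4 * Real.exp 1 * (12 * (n : ℝ) ^ 2 + 1) / δ)) :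
    s ≤ √(2 * V * Real.log (4 * Real.exp 1 * (2 * t + 1) / δ))
      + 3 * a * Real.log (4 * Real.exp 1 * (2 * t + 1) / δ) :=
  le_sqrt_add_of_crossing_bound_on_grid ha (three_le_log_four_mul_exp_one_mul_div ht hδ hδ1)
    hV hVt (fun n hn => Real.log_le_log (by positivity) (by gcongr)) h

theorem sum_range_inv_add_one_sq_le_two (N : ℕ) : ∑ n ∈ range N, ((n : ℝ) + 1)⁻¹ ^ 2 ≤ 2 := by
  have := sum_Ioo_inv_sq_le (α := ℝ) 0 (N + 1)
  rw [← Finset.Ico_add_one_left_eq_Ioo,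
    ← Finset.sum_Ico_add' (fun i : ℕ => ((i : ℝ) ^ 2)⁻¹) 0 N 1] at this
  simpa [inv_pow] using this

theorem tsum_two_mul_ofReal_div_le (δ : ℝ) (hδ : 0 ≤ δ) :
    ∑' n : ℕ, 2 * ENNReal.ofReal (δ / (4 * Real.exp 1 * (12 * (n : ℝ) ^ 2 + 1)))
      ≤ ENNReal.ofReal δ := by
  refine ENNReal.tsum_le_of_sum_range_le fun N => ?_
  simp_rw [show (2 : ENNReal) = ENNReal.ofReal 2 by simp, ← ENNReal.ofReal_mul zero_le_two]
  rw [← ENNReal.ofReal_sum_of_nonneg fun n _ => by positivity]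
  refine ENNReal.ofReal_le_ofReal ?_
  have he : 2 ≤ Real.exp 1 := by linarith [Real.add_one_le_exp 1]
  calc ∑ n ∈ range N, 2 * (δ / (4 * Real.exp 1 * (12 * (n : ℝ) ^ 2 + 1)))
      ≤ ∑ n ∈ range N, δ / 2 * ((n : ℝ) + 1)⁻¹ ^ 2 := by
        refine sum_le_sum fun n _ => ?_
        rw [inv_pow, ← div_eq_mul_inv, mul_div_assoc', div_div,
          div_le_div_iff₀ (by positivity) (by positivity)]
        have key : 4 * ((n : ℝ) + 1) ^ 2 ≤ 4 * Real.exp 1 * (12 * (n : ℝ) ^ 2 + 1) := by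
          nlinarith [sq_nonneg ((n : ℝ) - 1), sq_nonneg (n : ℝ)]
        nlinarith [mul_le_mul_of_nonneg_left key hδ]
    _ ≤ δ := by
        rw [← mul_sum]
        nlinarith [sum_range_inv_add_one_sq_le_two N]

theorem ofReal_one_sub_le_measure_of_compl_subset {Ω : Type*} {m0 : MeasurableSpace Ω}
    {μ : Measure Ω} [IsProbabilityMeasure μ] {good bad : Set Ω} {δ : ℝ} (hδ : 0 ≤ δ)
    (hbad : μ bad ≤ ENNReal.ofReal δ) (hgood : badᶜ ⊆ good) :
    ENNReal.ofReal (1 - δ) ≤ μ good := by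
  have hcover : 1 ≤ μ good + μ bad := by
    rw [← measure_univ (μ := μ)]
    exact (measure_mono fun ω _ => (em (ω ∈ bad)).symm.imp (fun h => hgood h) id).trans
      (measure_union_le _ _)
  calc ENNReal.ofReal (1 - δ) = 1 - ENNReal.ofReal δ := by
        rw [ENNReal.ofReal_sub _ hδ, ENNReal.ofReal_one]
    _ ≤ 1 - μ bad := tsub_le_tsub_left hbad 1
    _ ≤ μ good := tsub_le_iff_right.mpr hcover

namespace MeasureTheory.Supermartingale

variable {Ω : Type*} {m0 : MeasurableSpace Ω} {μ : Measure Ω} [IsFiniteMeasure μ]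
  {𝒢 : Filtration ℕ m0} {f : ℕ → Ω → ℝ}

theorem measure_exists_le_ge_le (hf : Supermartingale f 𝒢 μ) (hf0 : ∀ k ω, 0 ≤ f k ω)
    {ε : ℝ} (hε : 0 < ε) (n : ℕ) :
    μ {ω | ∃ k ≤ n, ε ≤ f k ω} ≤ ENNReal.ofReal ((∫ ω, f 0 ω ∂μ) / ε) := by
  set E := {ω | ∃ k ≤ n, ε ≤ f k ω}
  set τ : Ω → ℕ∞ := fun ω => (hittingBtwn f {y | ε ≤ y} 0 n ω : ℕ)
  have hτ : IsStoppingTime 𝒢 τ :=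
    hf.stronglyAdapted.adapted.isStoppingTime_hittingBtwn measurableSet_Ici
  have hτn : ∀ ω, τ ω ≤ n := fun ω => WithTop.coe_le_coe.mpr (hittingBtwn_le ω)
  have hint : Integrable (stoppedValue f τ) μ := by
    have h := (hf.neg.integrable_stoppedValue hτ hτn).neg
    rwa [show -stoppedValue (-f) τ = stoppedValue f τ from neg_neg _] at h
  have hstop : ∫ ω, stoppedValue f τ ω ∂μ ≤ ∫ ω, f 0 ω ∂μ := by
    have h := hf.neg.expected_stoppedValue_mono (isStoppingTime_const 𝒢 0) hτ
      (fun ω => bot_le) hτn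
    rw [stoppedValue_const] at h
    simp only [stoppedValue, Pi.neg_apply, integral_neg] at h ⊢
    linarith
  have hE : MeasurableSet E := by
    have : E = ⋃ k ∈ range (n + 1), {ω | ε ≤ f k ω} := by
      ext ω; simp [E]
    rw [this]
    exact .biUnion (range (n + 1)).countable_toSet fun k _ =>
      measurableSet_le measurable_const ((hf.stronglyMeasurable k).measurable.le (𝒢.le k))
  have hεE : ∀ ω ∈ E, ε ≤ stoppedValue f τ ω := fun ω ⟨k, hk, hfk⟩ =>
    stoppedValue_hittingBtwn_mem ⟨k, ⟨Nat.zero_le _, hk⟩, hfk⟩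
  have hmass : ε * μ.real E ≤ ∫ ω, f 0 ω ∂μ :=
    calc ε * μ.real E ≤ ∫ ω in E, stoppedValue f τ ω ∂μ :=
          setIntegral_ge_of_const_le_real hE (measure_ne_top _ _) hεE hint.integrableOn
      _ ≤ ∫ ω, stoppedValue f τ ω ∂μ :=
          setIntegral_le_integral hint (.of_forall fun ω => hf0 _ ω)
      _ ≤ ∫ ω, f 0 ω ∂μ := hstop
  rw [ENNReal.le_ofReal_iff_toReal_le (measure_ne_top _ _)
    (div_nonneg (integral_nonneg (hf0 0)) hε.le), le_div_iff₀ hε, mul_comm]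
  exact hmass

theorem measure_exists_ge_le (hf : Supermartingale f 𝒢 μ) (hf0 : ∀ k ω, 0 ≤ f k ω)
    {ε : ℝ} (hε : 0 < ε) :
    μ {ω | ∃ k, ε ≤ f k ω} ≤ ENNReal.ofReal ((∫ ω, f 0 ω ∂μ) / ε) := by
  have hunion : {ω | ∃ k, ε ≤ f k ω} = ⋃ n, {ω | ∃ k ≤ n, ε ≤ f k ω} := by
    ext ω
    simp only [Set.mem_iUnion]
    exact ⟨fun ⟨k, hk⟩ => ⟨k, k, le_rfl, hk⟩, fun ⟨_, k, _, hk⟩ => ⟨k, hk⟩⟩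
  have hmono : Monotone fun n => {ω | ∃ k ≤ n, ε ≤ f k ω} :=
    fun _ _ hnm _ ⟨k, hk, hfk⟩ => ⟨k, hk.trans hnm, hfk⟩
  rw [hunion, hmono.measure_iUnion]
  exact iSup_le (hf.measure_exists_le_ge_le hf0 hε)

end MeasureTheory.Supermartingale

section ConditionalExpectation

variable {Ω : Type*} {m m0 : MeasurableSpace Ω} {μ : Measure Ω} {Z : Ω → ℝ} {a l : ℝ}

theorem integrable_sq_of_abs_le [IsFiniteMeasure μ] (hZ : AEStronglyMeasurable Z μ)
    (hZa : ∀ ω, |Z ω| ≤ a) : Integrable (Z ^ 2) μ :=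
  .of_bound (hZ.pow 2) (a ^ 2) (.of_forall fun ω => by
    rw [Real.norm_eq_abs, Pi.pow_apply, abs_sq]
    exact sq_le_sq.mpr ((hZa ω).trans (le_abs_self a)))

theorem integrable_exp_mul_of_abs_le [IsFiniteMeasure μ] (hZ : AEStronglyMeasurable Z μ)
    (hZa : ∀ ω, |Z ω| ≤ a) (hl : 0 ≤ l) : Integrable (fun ω => Real.exp (l * Z ω)) μ := by
  refine .of_bound (Real.continuous_exp.comp_aestronglyMeasurable (hZ.const_mul l))
    (Real.exp (l * a)) (.of_forall fun ω => ?_)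
  rw [Real.norm_eq_abs, abs_of_pos (Real.exp_pos _), Real.exp_le_exp]
  exact mul_le_mul_of_nonneg_left ((le_abs_self _).trans (hZa ω)) hl

theorem condExp_mul_of_stronglyMeasurable_left_of_abs_le (hm : m ≤ m0) {f g : Ω → ℝ} {C : ℝ}
    (hf : StronglyMeasurable[m] f) (hfC : ∀ ω, |f ω| ≤ C) (hg : Integrable g μ) :
    μ[f * g | m] =ᵐ[μ] f * μ[g | m] :=
  condExp_mul_of_stronglyMeasurable_left hf
    (hg.bdd_mul (hf.mono hm).aestronglyMeasurable (.of_forall hfC)) hg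

theorem condExp_exp_mul_le [IsFiniteMeasure μ] (hm : m ≤ m0) (hZ : AEStronglyMeasurable Z μ)
    (hZa : ∀ ω, |Z ω| ≤ a) (hZ0 : μ[Z | m] =ᵐ[μ] 0) (hl : 0 ≤ l) (hla : l * a ≤ 1) :
    μ[fun ω => Real.exp (l * Z ω) | m]
      ≤ᵐ[μ] fun ω => Real.exp ((1 / 2 + 2 / 9 * (l * a)) * l ^ 2 * μ[Z ^ 2 | m] ω) := by
  set c := (1 / 2 + 2 / 9 * (l * a)) * l ^ 2
  have hZint : Integrable Z μ := .of_bound hZ a (.of_forall hZa)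
  have hZ2int := integrable_sq_of_abs_le hZ hZa
  have hquad : (fun ω => Real.exp (l * Z ω)) ≤ (fun _ => 1) + l • Z + c • Z ^ 2 := fun ω => by
    have hlZ : |l * Z ω| ≤ l * a := by
      rw [abs_mul, abs_of_nonneg hl]; exact mul_le_mul_of_nonneg_left (hZa ω) hl
    have := Real.exp_le_one_add_add_mul_sq hlZ hla
    simp only [Pi.add_apply, Pi.smul_apply, Pi.pow_apply, smul_eq_mul, c]
    linarith
  have hlin : μ[(fun _ => 1) + l • Z + c • Z ^ 2 | m]
      =ᵐ[μ] (fun _ => 1) + l • μ[Z | m] + c • μ[Z ^ 2 | m] := by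
    filter_upwards [condExp_add ((integrable_const 1).add (hZint.smul l)) (hZ2int.smul c) m,
      condExp_add (integrable_const (1 : ℝ)) (hZint.smul l) m, condExp_smul l Z m,
      condExp_smul c (Z ^ 2) m] with ω h1 h2 h3 h4
    simp only [Pi.add_apply, Pi.smul_apply] at h1 h2 h3 h4 ⊢
    rw [h1, h2, h3, h4, condExp_const hm]
  filter_upwards [condExp_mono (integrable_exp_mul_of_abs_le hZ hZa hl)
    (((integrable_const 1).add (hZint.smul l)).add (hZ2int.smul c)) (.of_forall hquad),
    hlin, hZ0] with ω hmono hlin hZ0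
  rw [hlin] at hmono
  simp only [Pi.add_apply, Pi.smul_apply, hZ0, Pi.zero_apply, smul_eq_mul] at hmono
  linarith [Real.add_one_le_exp (c * μ[Z ^ 2 | m] ω)]

end ConditionalExpectation

section ExponentialSupermartingale

variable {Ω : Type*} {m0 : MeasurableSpace Ω} {μ : Measure Ω} {ℱ : Filtration ℕ m0}
  {X : ℕ → Ω → ℝ}

def partialSum (X : ℕ → Ω → ℝ) (k : ℕ) (ω : Ω) : ℝ := ∑ s ∈ Icc 1 k, X s ω

noncomputable def predQuadVar (μ : Measure Ω) (ℱ : Filtration ℕ m0) (X : ℕ → Ω → ℝ) (k : ℕ)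
    (ω : Ω) : ℝ :=
  ∑ s ∈ Icc 1 k, μ[X s ^ 2 | ℱ (s - 1)] ω

theorem partialSum_succ (X : ℕ → Ω → ℝ) (k : ℕ) :
    partialSum X (k + 1) = partialSum X k + X (k + 1) :=
  funext fun _ => sum_Icc_succ_top (Nat.le_add_left 1 k) _

theorem predQuadVar_succ (μ : Measure Ω) (ℱ : Filtration ℕ m0) (X : ℕ → Ω → ℝ) (k : ℕ) :
    predQuadVar μ ℱ X (k + 1) = predQuadVar μ ℱ X k + μ[X (k + 1) ^ 2 | ℱ k] :=
  funext fun _ => sum_Icc_succ_top (Nat.le_add_left 1 k) _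

theorem partialSum_neg (X : ℕ → Ω → ℝ) : partialSum (-X) = -partialSum X := by
  ext k ω
  simp [partialSum, sum_neg_distrib]

theorem predQuadVar_neg (μ : Measure Ω) (ℱ : Filtration ℕ m0) (X : ℕ → Ω → ℝ) :
    predQuadVar μ ℱ (-X) = predQuadVar μ ℱ X := by
  ext k ω
  simp [predQuadVar]

theorem stronglyMeasurable_partialSum (hX : ∀ t, 1 ≤ t → StronglyMeasurable[ℱ t] (X t))
    (k : ℕ) : StronglyMeasurable[ℱ k] (partialSum X k) :=
  Finset.stronglyMeasurable_fun_sum _ fun s hs =>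
    (hX s (mem_Icc.mp hs).1).mono (ℱ.mono (mem_Icc.mp hs).2)

theorem stronglyMeasurable_predQuadVar (k : ℕ) :
    StronglyMeasurable[ℱ k] (predQuadVar μ ℱ X k) :=
  Finset.stronglyMeasurable_fun_sum _ fun s hs =>
    stronglyMeasurable_condExp.mono (ℱ.mono ((Nat.sub_le s 1).trans (mem_Icc.mp hs).2))

theorem abs_partialSum_le {a : ℝ} (hXa : ∀ t ω, |X t ω| ≤ a) (k : ℕ) (ω : Ω) :
    |partialSum X k ω| ≤ k * a :=
  (abs_sum_le_sum_abs _ _).trans <| by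
    simpa using sum_le_sum (s := Icc 1 k) fun s _ => hXa s ω

theorem predQuadVar_nonneg_ae (k : ℕ) : ∀ᵐ ω ∂μ, 0 ≤ predQuadVar μ ℱ X k ω := by
  have : ∀ᵐ ω ∂μ, ∀ s, 0 ≤ μ[X s ^ 2 | ℱ (s - 1)] ω :=
    ae_all_iff.mpr fun s => condExp_nonneg (.of_forall fun ω => sq_nonneg (X s ω))
  filter_upwards [this] with ω hω using sum_nonneg fun s _ => hω s

theorem ae_predQuadVar_mem_Icc [IsFiniteMeasure μ] {a : ℝ} (hXa : ∀ t ω, |X t ω| ≤ a) :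
    ∀ᵐ ω ∂μ, ∀ k : ℕ, 0 ≤ predQuadVar μ ℱ X k ω ∧ predQuadVar μ ℱ X k ω ≤ k * a ^ 2 := by
  have hq : ∀ᵐ ω ∂μ, ∀ s, |μ[X s ^ 2 | ℱ (s - 1)] ω| ≤ a ^ 2 :=
    ae_all_iff.mpr fun s => ae_bdd_abs_condExp_of_ae_bdd_abs (.of_forall fun ω => by
      rw [Pi.pow_apply, abs_sq]
      exact sq_le_sq.mpr ((hXa s ω).trans (le_abs_self a)))
  filter_upwards [hq, ae_all_iff.mpr fun k => predQuadVar_nonneg_ae k] with ω hω h0 k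
  refine ⟨h0 k, ?_⟩
  simpa [predQuadVar] using sum_le_sum (s := Icc 1 k) fun s _ => (le_abs_self _).trans (hω s)

theorem ae_predQuadVar_mul_eq [IsFiniteMeasure μ] {w Y : ℕ → Ω → ℝ} {b C : ℝ}
    (hw : ∀ t, 1 ≤ t → StronglyMeasurable[ℱ (t - 1)] (w t)) (hwC : ∀ t ω, |w t ω| ≤ C)
    (hY : ∀ t, 1 ≤ t → StronglyMeasurable[ℱ t] (Y t)) (hYb : ∀ t ω, |Y t ω| ≤ b) :
    ∀ᵐ ω ∂μ, ∀ k, predQuadVar μ ℱ (fun s ω => w s ω * Y s ω) k ω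
      = ∑ s ∈ Icc 1 k, w s ω ^ 2 * μ[fun ω' => Y s ω' ^ 2 | ℱ (s - 1)] ω := by
  have hs : ∀ᵐ ω ∂μ, ∀ s, 1 ≤ s → μ[(fun ω => w s ω * Y s ω) ^ 2 | ℱ (s - 1)] ω
      = w s ω ^ 2 * μ[fun ω' => Y s ω' ^ 2 | ℱ (s - 1)] ω := by
    refine ae_all_iff.mpr fun s => ?_
    rcases Nat.lt_or_ge s 1 with hs | hs
    · exact .of_forall fun ω h => absurd h (not_le.mpr hs)
    have hsq : (fun ω => w s ω * Y s ω) ^ 2 = w s ^ 2 * Y s ^ 2 := by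
      ext ω; simp [mul_pow]
    have hw2 : ∀ ω, |(w s ^ 2) ω| ≤ C ^ 2 := fun ω => by
      rw [Pi.pow_apply, abs_sq]
      exact sq_le_sq.mpr ((hwC s ω).trans (le_abs_self C))
    filter_upwards [condExp_mul_of_stronglyMeasurable_left_of_abs_le (ℱ.le _) ((hw s hs).pow 2)
      hw2 (integrable_sq_of_abs_le ((hY s hs).mono (ℱ.le s)).aestronglyMeasurable (hYb s))]
      with ω hω _
    rw [hsq]
    exact hω
  filter_upwards [hs] with ω hω k
  exact sum_congr rfl fun s hs' => hω s (mem_Icc.mp hs').1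

theorem supermartingale_exp_partialSum [IsFiniteMeasure μ] {a l : ℝ}
    (hX : ∀ t, 1 ≤ t → StronglyMeasurable[ℱ t] (X t)) (hXa : ∀ t ω, |X t ω| ≤ a)
    (hX0 : ∀ t, 1 ≤ t → μ[X t | ℱ (t - 1)] =ᵐ[μ] 0) (hl : 0 ≤ l) (hla : l * a ≤ 1) :
    Supermartingale (fun k ω => Real.exp (l * partialSum X k ω
      - (1 / 2 + 2 / 9 * (l * a)) * l ^ 2 * predQuadVar μ ℱ X k ω)) ℱ μ := by
  set c := (1 / 2 + 2 / 9 * (l * a)) * l ^ 2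
  set M := fun k ω => Real.exp (l * partialSum X k ω - c * predQuadVar μ ℱ X k ω)
  have hM : ∀ k, StronglyMeasurable[ℱ k] (M k) := fun k =>
    Real.continuous_exp.comp_stronglyMeasurable
      (((stronglyMeasurable_partialSum hX k).const_mul l).sub
        ((stronglyMeasurable_predQuadVar k).const_mul c))
  have hMint : ∀ k, Integrable (M k) μ := fun k => by
    refine .of_bound ((hM k).mono (ℱ.le k)).aestronglyMeasurable (Real.exp (l * (k * a))) ?_
    filter_upwards [predQuadVar_nonneg_ae k] with ω hV
    have ha : 0 ≤ a := (abs_nonneg _).trans (hXa 0 ω)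
    rw [Real.norm_eq_abs, abs_of_pos (Real.exp_pos _), Real.exp_le_exp]
    nlinarith [mul_le_mul_of_nonneg_left (le_abs_self _ |>.trans (abs_partialSum_le hXa k ω)) hl,
      mul_nonneg (by positivity : 0 ≤ c) hV]
  refine supermartingale_nat (fun k => hM k) hMint fun k => ?_
  set Z := X (k + 1)
  set G := fun ω => M k ω * Real.exp (-(c * μ[Z ^ 2 | ℱ k] ω))
  have hZ : AEStronglyMeasurable Z μ :=
    ((hX (k + 1) (Nat.le_add_left 1 k)).mono (ℱ.le _)).aestronglyMeasurable
  have hG : StronglyMeasurable[ℱ k] G := (hM k).mul <| Real.continuous_exp.comp_stronglyMeasurable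
    (stronglyMeasurable_condExp.const_mul c).neg
  have hsplit : M (k + 1) = G * fun ω => Real.exp (l * Z ω) := funext fun ω => by
    simp only [M, G, Pi.mul_apply, partialSum_succ, predQuadVar_succ, Pi.add_apply]
    rw [mul_assoc, ← Real.exp_add, ← Real.exp_add]
    congr 1
    ring
  filter_upwards [condExp_mul_of_stronglyMeasurable_left hG (hsplit ▸ hMint (k + 1))
      (integrable_exp_mul_of_abs_le hZ (hXa _) hl),
    condExp_exp_mul_le (ℱ.le k) hZ (hXa _) (hX0 (k + 1) (Nat.le_add_left 1 k)) hl hla]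
    with ω hpull hstep
  rw [hsplit, hpull, Pi.mul_apply]
  calc G ω * μ[fun ω => Real.exp (l * Z ω) | ℱ k] ω
      ≤ G ω * Real.exp (c * μ[Z ^ 2 | ℱ k] ω) :=
        mul_le_mul_of_nonneg_left hstep (by positivity)
    _ = M k ω := by
        simp only [G, mul_assoc, ← Real.exp_add, neg_add_cancel, Real.exp_zero, mul_one]

theorem measure_exists_lt_partialSum_le [IsProbabilityMeasure μ] {a l : ℝ}
    (hX : ∀ t, 1 ≤ t → StronglyMeasurable[ℱ t] (X t)) (hXa : ∀ t ω, |X t ω| ≤ a)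
    (hX0 : ∀ t, 1 ≤ t → μ[X t | ℱ (t - 1)] =ᵐ[μ] 0) (hl : 0 ≤ l) (hla : l * a ≤ 1) (A : ℝ) :
    μ {ω | ∃ k, A < l * partialSum X k ω
      - (1 / 2 + 2 / 9 * (l * a)) * l ^ 2 * predQuadVar μ ℱ X k ω}
      ≤ ENNReal.ofReal (Real.exp (-A)) := by
  have hM := supermartingale_exp_partialSum hX hXa hX0 hl hla
  have hM0 : ∫ ω, Real.exp (l * partialSum X 0 ω
      - (1 / 2 + 2 / 9 * (l * a)) * l ^ 2 * predQuadVar μ ℱ X 0 ω) ∂μ = 1 := by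
    simp [partialSum, predQuadVar]
  calc μ {ω | ∃ k, A < l * partialSum X k ω
        - (1 / 2 + 2 / 9 * (l * a)) * l ^ 2 * predQuadVar μ ℱ X k ω}
    _ ≤ μ {ω | ∃ k, Real.exp A ≤ Real.exp (l * partialSum X k ω
          - (1 / 2 + 2 / 9 * (l * a)) * l ^ 2 * predQuadVar μ ℱ X k ω)} :=
        measure_mono fun ω ⟨k, hk⟩ => ⟨k, Real.exp_le_exp.mpr hk.le⟩
    _ ≤ _ := hM.measure_exists_ge_le (fun _ _ => (Real.exp_pos _).le) (Real.exp_pos A)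
    _ = _ := by rw [hM0, Real.exp_neg, one_div]

theorem measure_exists_lt_partialSum_grid_le [IsProbabilityMeasure μ] {a δ : ℝ} (ha : 0 < a)
    (hδ : 0 < δ) (hX : ∀ t, 1 ≤ t → StronglyMeasurable[ℱ t] (X t)) (hXa : ∀ t ω, |X t ω| ≤ a)
    (hX0 : ∀ t, 1 ≤ t → μ[X t | ℱ (t - 1)] =ᵐ[μ] 0) (n : ℕ) :
    μ {ω | ∃ k, Real.log (4 * Real.exp 1 * (12 * (n : ℝ) ^ 2 + 1) / δ)
        < (a * (n + 1))⁻¹ * partialSum X k ω - (1 / 2 + 2 / 9 * ((a * (n + 1))⁻¹ * a))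
          * (a * (n + 1))⁻¹ ^ 2 * predQuadVar μ ℱ X k ω}
      ≤ ENNReal.ofReal (δ / (4 * Real.exp 1 * (12 * (n : ℝ) ^ 2 + 1))) := by
  have hla : (a * (n + 1))⁻¹ * a ≤ 1 := by
    rw [mul_inv_rev, mul_assoc, inv_mul_cancel₀ ha.ne', mul_one]
    exact inv_le_one_of_one_le₀ (by linarith [(n.cast_nonneg : (0 : ℝ) ≤ n)])
  have h := measure_exists_lt_partialSum_le hX hXa hX0 (by positivity) hla
    (Real.log (4 * Real.exp 1 * (12 * (n : ℝ) ^ 2 + 1) / δ))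
  rwa [Real.exp_neg, Real.exp_log (by positivity), inv_div] at h

theorem bernstein_self_normalized_partialSum [IsProbabilityMeasure μ] {a δ : ℝ} (ha : 0 < a)
    (hX : ∀ t, 1 ≤ t → StronglyMeasurable[ℱ t] (X t)) (hXa : ∀ t ω, |X t ω| ≤ a)
    (hX0 : ∀ t, 1 ≤ t → μ[X t | ℱ (t - 1)] =ᵐ[μ] 0) (hδ : 0 < δ) :
    ENNReal.ofReal (1 - δ) ≤ μ {ω | ∀ t : ℕ, 1 ≤ t → |partialSum X t ω|
      ≤ √(2 * predQuadVar μ ℱ X t ω * Real.log (4 * Real.exp 1 * (2 * t + 1) / δ))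
        + 3 * a * Real.log (4 * Real.exp 1 * (2 * t + 1) / δ)} := by
  rcases lt_or_ge 1 δ with hδ1 | hδ1
  · simp [ENNReal.ofReal_of_nonpos (by linarith : 1 - δ ≤ 0)]
  set crossing : ℕ → (ℕ → Ω → ℝ) → Set Ω := fun n Z => {ω | ∃ k,
    Real.log (4 * Real.exp 1 * (12 * (n : ℝ) ^ 2 + 1) / δ)
      < (a * (n + 1))⁻¹ * partialSum Z k ω - (1 / 2 + 2 / 9 * ((a * (n + 1))⁻¹ * a))
        * (a * (n + 1))⁻¹ ^ 2 * predQuadVar μ ℱ Z k ω}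
  set null := {ω | ¬ ∀ k : ℕ, 0 ≤ predQuadVar μ ℱ X k ω ∧ predQuadVar μ ℱ X k ω ≤ k * a ^ 2}
  refine ofReal_one_sub_le_measure_of_compl_subset hδ.le
    (bad := null ∪ ⋃ n, (crossing n X ∪ crossing n (-X))) ?_ fun ω hω t ht => ?_
  · have hneg := measure_exists_lt_partialSum_grid_le (X := -X) ha hδ
      (fun t ht => (hX t ht).neg) (fun t ω => by simpa using hXa t ω)
      fun t ht => (condExp_neg _ _).trans <| by filter_upwards [hX0 t ht] with ω hω; simp [hω]
    calc _ ≤ μ null + ∑' n, (μ (crossing n X) + μ (crossing n (-X))) :=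
          (measure_union_le _ _).trans <| add_le_add le_rfl
            ((measure_iUnion_le _).trans (ENNReal.tsum_le_tsum fun n => measure_union_le _ _))
      _ ≤ 0 + ∑' n : ℕ, 2 * ENNReal.ofReal (δ / (4 * Real.exp 1 * (12 * (n : ℝ) ^ 2 + 1))) := by
          gcongr with n
          · exact (ae_predQuadVar_mem_Icc hXa).le
          · rw [two_mul]
            exact add_le_add (measure_exists_lt_partialSum_grid_le ha hδ hX hXa hX0 n) (hneg n)
      _ ≤ ENNReal.ofReal δ := by rw [zero_add]; exact tsum_two_mul_ofReal_div_le δ hδ.le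
  · have hω : ω ∉ null ∧ ∀ n, ω ∉ crossing n X ∧ ω ∉ crossing n (-X) := by
      simpa only [Set.mem_compl_iff, Set.mem_union, Set.mem_iUnion, not_or, not_exists] using hω
    have hV : 0 ≤ predQuadVar μ ℱ X t ω ∧ predQuadVar μ ℱ X t ω ≤ t * a ^ 2 :=
      not_not.mp hω.1 t
    have hside := fun s => le_sqrt_add_log_of_crossing_bound_on_grid (s := s) ha ht hδ hδ1 hV.1 hV.2
    have hupper := hside _ fun n => not_lt.mp fun h => (hω.2 n).1 ⟨t, h⟩
    have hlower := hside (-partialSum X t ω) fun n => not_lt.mp fun h => (hω.2 n).2 ⟨t, by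
      rwa [partialSum_neg, predQuadVar_neg]⟩
    exact abs_le.mpr ⟨neg_le.mp hlower, hupper⟩

end ExponentialSupermartingale

/-- explicit form of the self-normalized Bernstein inequality. For an
adapted sequence `(Y t)` with `|Y t| ≤ b` and `E[Y t | ℱ (t−1)] = 0`, predictable
weights `w t ∈ [0,1]`, `S_t = Σ_{s=1}^t w_s Y_s` and
`V_t = Σ_{s=1}^t w_s² E[Y_s² | ℱ (s−1)]`, with probability at least `1 − δ`,
simultaneously for all `t ≥ 1`,
`|S_t| ≤ √(2 V_t log(4e(2t+1)/δ)) + 3 b log(4e(2t+1)/δ)`. -/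
theorem bernstein_self_normalized_explicit
    {Ω : Type*} {m0 : MeasurableSpace Ω} (μ : Measure Ω) [IsProbabilityMeasure μ]
    (ℱ : Filtration ℕ m0) (b : ℝ) (hb : 0 < b)
    (Y w : ℕ → Ω → ℝ)
    (hYadapted : ∀ t, 1 ≤ t → StronglyMeasurable[ℱ t] (Y t))
    (hYbdd : ∀ t ω, |Y t ω| ≤ b)
    (hYcentered : ∀ t, 1 ≤ t → μ[Y t | ℱ (t - 1)] =ᵐ[μ] 0)
    (hwpred : ∀ t, 1 ≤ t → StronglyMeasurable[ℱ (t - 1)] (w t))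
    (hw01 : ∀ t ω, w t ω ∈ Set.Icc (0 : ℝ) 1)
    (δ : ℝ) (hδ : 0 < δ) :
    ENNReal.ofReal (1 - δ) ≤
      μ {ω | ∀ t : ℕ, 1 ≤ t →
        |∑ s ∈ Finset.Icc 1 t, w s ω * Y s ω|
          ≤ Real.sqrt (2 * (∑ s ∈ Finset.Icc 1 t,
                (w s ω) ^ 2 * (μ[(fun ω' => (Y s ω') ^ 2) | ℱ (s - 1)]) ω)
              * Real.log (4 * Real.exp 1 * (2 * (t : ℝ) + 1) / δ))
            + 3 * b * Real.log (4 * Real.exp 1 * (2 * (t : ℝ) + 1) / δ)} := by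
  have hw1 : ∀ t ω, |w t ω| ≤ 1 := fun t ω =>
    abs_le.mpr ⟨by linarith [(hw01 t ω).1], (hw01 t ω).2⟩
  have hX : ∀ t, 1 ≤ t → StronglyMeasurable[ℱ t] (fun ω => w t ω * Y t ω) := fun t ht =>
    ((hwpred t ht).mono (ℱ.mono (Nat.sub_le t 1))).mul (hYadapted t ht)
  have hXb : ∀ t ω, |w t ω * Y t ω| ≤ b := fun t ω => by
    rw [abs_mul]
    nlinarith [hw1 t ω, hYbdd t ω, abs_nonneg (w t ω), abs_nonneg (Y t ω)]
  have hX0 : ∀ t, 1 ≤ t → μ[fun ω => w t ω * Y t ω | ℱ (t - 1)] =ᵐ[μ] 0 := fun t ht => by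
    have hY : Integrable (Y t) μ := .of_bound
      ((hYadapted t ht).mono (ℱ.le t)).aestronglyMeasurable b (.of_forall (hYbdd t))
    filter_upwards [condExp_mul_of_stronglyMeasurable_left_of_abs_le (ℱ.le _) (hwpred t ht)
      (hw1 t) hY, hYcentered t ht] with ω hω hω'
    simp [← Pi.mul_def, hω, hω']
  refine (bernstein_self_normalized_partialSum hb hX hXb hX0 hδ).trans (measure_mono_ae ?_)
  filter_upwards [ae_predQuadVar_mul_eq hwpred hw1 hYadapted hYbdd] with ω hV hω t ht
  rw [← hV]
  exact hω t ht
end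

section
/- Let S be a finite set, let p ∈ Σ_S, and let f, g : S → ℝ satisfy 0 ≤ f(s) ≤ b and 0 ≤ g(s) ≤ b for all s ∈ S. Then Var_p(f) ≤ 2 · Var_p(g) + 2 b · p|f − g|, where p|f − g| = Σ_{s∈S} p(s) |f(s) − g(s)|. -/
open Finset

/-- For `p` in the probability simplex over a finite set `S` and
`f, g : S → ℝ` with values in `[0, b]`, we have
`Var_p(f) ≤ 2 Var_p(g) + 2 b · p|f − g|`. -/
theorem variance_switch_function {S : Type*} [Fintype S]
    (p : S → ℝ) (hp : ∀ s, 0 ≤ p s) (hpsum : ∑ s, p s = 1)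
    (b : ℝ) (f g : S → ℝ)
    (hf : ∀ s, 0 ≤ f s ∧ f s ≤ b) (hg : ∀ s, 0 ≤ g s ∧ g s ≤ b) :
    ∑ s, p s * (f s - ∑ s', p s' * f s') ^ 2
      ≤ 2 * (∑ s, p s * (g s - ∑ s', p s' * g s') ^ 2)
        + 2 * b * ∑ s, p s * |f s - g s| := by
  set μf := ∑ s', p s' * f s' with hμf
  set μg := ∑ s', p s' * g s' with hμg
  -- Step 1: Var_p(f) ≤ E_p[(f - μg)²]
  have h1 : ∑ s, p s * (f s - μf) ^ 2 ≤ ∑ s, p s * (f s - μg) ^ 2 := by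
    have key : ∑ s, p s * (f s - μg) ^ 2 - ∑ s, p s * (f s - μf) ^ 2
        = (μf - μg) ^ 2 := by
      rw [← Finset.sum_sub_distrib]
      have : ∀ s ∈ (univ : Finset S),
          p s * (f s - μg) ^ 2 - p s * (f s - μf) ^ 2
          = (2 * (μf - μg)) * (p s * f s)
            - ((μf - μg) * (μf + μg)) * p s := by
        intro s _; ring
      rw [Finset.sum_congr rfl this, Finset.sum_sub_distrib,
        ← Finset.mul_sum, ← Finset.mul_sum, ← hμf, hpsum]
      ring
    nlinarith [sq_nonneg (μf - μg)]
  -- Step 2: pointwise bound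
  have h2 : ∀ s, p s * (f s - μg) ^ 2
      ≤ 2 * (p s * (g s - μg) ^ 2) + 2 * b * (p s * |f s - g s|) := by
    intro s
    have habs : |f s - g s| ≤ b := by
      rw [abs_le]
      constructor <;> nlinarith [(hf s).1, (hf s).2, (hg s).1, (hg s).2]
    have hsq : (f s - g s) ^ 2 ≤ b * |f s - g s| := by
      calc (f s - g s) ^ 2 = |f s - g s| * |f s - g s| := by
            rw [← sq_abs, sq]
        _ ≤ b * |f s - g s| := by
            exact mul_le_mul_of_nonneg_right habs (abs_nonneg _)
    have hps := hp s
    nlinarith [sq_nonneg (f s - g s - (g s - μg)), mul_le_mul_of_nonneg_left hsq hps]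
  calc ∑ s, p s * (f s - μf) ^ 2
      ≤ ∑ s, p s * (f s - μg) ^ 2 := h1
    _ ≤ ∑ s, (2 * (p s * (g s - μg) ^ 2) + 2 * b * (p s * |f s - g s|)) :=
        Finset.sum_le_sum fun s _ => h2 s
    _ = 2 * (∑ s, p s * (g s - μg) ^ 2) + 2 * b * ∑ s, p s * |f s - g s| := by
        rw [Finset.sum_add_distrib, ← Finset.mul_sum, ← Finset.mul_sum]
end

section
/- Let S be a finite set, let p, q ∈ Σ_S, and let f : S → ℝ satisfy 0 ≤ f(s) ≤ b for all s ∈ S. Then Var_q(f) ≤ Var_p(f) + 3 b² · ‖p − q‖₁, where ‖p − q‖₁ = Σ_{s∈S} |p(s) − q(s)|. -/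
open Finset

/-- For `p, q` in the probability simplex over a finite set `S` and
`f : S → ℝ` with values in `[0, b]`, we have
`Var_q(f) ≤ Var_p(f) + 3 b² ‖p − q‖₁`. -/
theorem variance_switch_measure {S : Type*} [Fintype S]
    (p q : S → ℝ) (hp : ∀ s, 0 ≤ p s) (hpsum : ∑ s, p s = 1)
    (hq : ∀ s, 0 ≤ q s) (hqsum : ∑ s, q s = 1)
    (b : ℝ) (f : S → ℝ) (hf : ∀ s, 0 ≤ f s ∧ f s ≤ b) :
    ∑ s, q s * (f s - ∑ s', q s' * f s') ^ 2
      ≤ (∑ s, p s * (f s - ∑ s', p s' * f s') ^ 2)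
        + 3 * b ^ 2 * ∑ s, |p s - q s| := by
  have hS : (Finset.univ : Finset S).Nonempty := by
    by_contra h
    rw [Finset.not_nonempty_iff_eq_empty.mp h] at hpsum
    simp at hpsum
  obtain ⟨s₀, _⟩ := hS
  have hb : 0 ≤ b := le_trans (hf s₀).1 (hf s₀).2
  set D := ∑ s, |p s - q s| with hDdef
  have hD : 0 ≤ D := Finset.sum_nonneg fun s _ => abs_nonneg _
  set μp := ∑ s', p s' * f s' with hμp
  set μq := ∑ s', q s' * f s' with hμq
  -- variance identity
  have expand : ∀ r : S → ℝ, (∑ s, r s = 1) →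
      ∑ s, r s * (f s - ∑ s', r s' * f s') ^ 2
        = (∑ s, r s * f s ^ 2) - (∑ s', r s' * f s') ^ 2 := by
    intro r hr
    have h1 : ∀ s : S, r s * (f s - ∑ s', r s' * f s') ^ 2
        = r s * f s ^ 2 - 2 * (∑ s', r s' * f s') * (r s * f s)
          + (∑ s', r s' * f s') ^ 2 * r s := fun s => by ring
    rw [Finset.sum_congr rfl fun s _ => h1 s]
    rw [Finset.sum_add_distrib, Finset.sum_sub_distrib, ← Finset.mul_sum,
      ← Finset.mul_sum, hr]
    ring
  rw [expand p hpsum, expand q hqsum]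
  -- bound on second moments
  have h1 : (∑ s, q s * f s ^ 2) - (∑ s, p s * f s ^ 2) ≤ b ^ 2 * D := by
    have e : (∑ s, q s * f s ^ 2) - (∑ s, p s * f s ^ 2)
        = ∑ s, (q s - p s) * f s ^ 2 := by
      rw [← Finset.sum_sub_distrib]; apply Finset.sum_congr rfl; intros; ring
    rw [e, hDdef, Finset.mul_sum]
    apply Finset.sum_le_sum
    intro s _
    have hf2 : f s ^ 2 ≤ b ^ 2 := pow_le_pow_left₀ (hf s).1 (hf s).2 2
    have habs : q s - p s ≤ |p s - q s| := by
      rw [abs_sub_comm]; exact le_abs_self _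
    calc (q s - p s) * f s ^ 2 ≤ |p s - q s| * f s ^ 2 :=
          mul_le_mul_of_nonneg_right habs (sq_nonneg _)
      _ ≤ |p s - q s| * b ^ 2 :=
          mul_le_mul_of_nonneg_left hf2 (abs_nonneg _)
      _ = b ^ 2 * |p s - q s| := by ring
  -- bound on means
  have h2 : |μp - μq| ≤ b * D := by
    rw [hμp, hμq, ← Finset.sum_sub_distrib]
    calc |∑ s, (p s * f s - q s * f s)| ≤ ∑ s, |p s * f s - q s * f s| :=
          Finset.abs_sum_le_sum_abs _ _
      _ ≤ ∑ s, b * |p s - q s| := by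
          apply Finset.sum_le_sum
          intro s _
          have : p s * f s - q s * f s = (p s - q s) * f s := by ring
          rw [this, abs_mul, abs_of_nonneg (hf s).1]
          calc |p s - q s| * f s ≤ |p s - q s| * b :=
                mul_le_mul_of_nonneg_left (hf s).2 (abs_nonneg _)
            _ = b * |p s - q s| := by ring
      _ = b * D := by rw [hDdef, Finset.mul_sum]
  have hμp0 : 0 ≤ μp := Finset.sum_nonneg fun s _ => mul_nonneg (hp s) (hf s).1
  have hμq0 : 0 ≤ μq := Finset.sum_nonneg fun s _ => mul_nonneg (hq s) (hf s).1
  have hμpb : μp ≤ b := by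
    calc μp ≤ ∑ s', p s' * b :=
          Finset.sum_le_sum fun s _ => mul_le_mul_of_nonneg_left (hf s).2 (hp s)
      _ = b := by rw [← Finset.sum_mul, hpsum, one_mul]
  have hμqb : μq ≤ b := by
    calc μq ≤ ∑ s', q s' * b :=
          Finset.sum_le_sum fun s _ => mul_le_mul_of_nonneg_left (hf s).2 (hq s)
      _ = b := by rw [← Finset.sum_mul, hqsum, one_mul]
  have h2' := abs_le.mp h2
  nlinarith [mul_nonneg (mul_nonneg hb hD) (add_nonneg hμp0 hμq0),
    mul_le_mul_of_nonneg_right h2'.2 (add_nonneg hμp0 hμq0),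
    mul_nonneg (sub_nonneg.mpr (add_le_add hμpb hμqb)) (mul_nonneg hb hD)]
end

section
/- Let T ∈ ℕ and let (u_t)_{t≥1} be a sequence of real numbers with u_t ∈ [0,1] for all t. Set U_0 = 0 and U_t = Σ_{ℓ=1}^t u_ℓ. Then Σ_{t=0}^T u_{t+1} / max(U_t, 1) ≤ 4 · log(U_{T+1} + 1). -/
/-!
Each summand is bounded by an increment of `t ↦ 4 log (U_t + 1)`: with `a = U_t` and
`v = u_{t+1} ∈ [0, 1]`, the inequality `1 - 1/x ≤ log x` at `x = (a + v + 1) / (a + 1)` gives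
`v / (a + v + 1) ≤ log (a + v + 1) - log (a + 1)`, and `a + v + 1 ≤ 4 max a 1`. The sum then
telescopes.
-/

open Finset

lemma div_add_add_one_le_log_sub {a v : ℝ} (ha : 0 ≤ a) (hv : 0 ≤ v) :
    v / (a + v + 1) ≤ Real.log (a + v + 1) - Real.log (a + 1) := by
  have hlog := Real.one_sub_inv_le_log_of_pos (x := (a + v + 1) / (a + 1)) (by positivity)
  rw [Real.log_div (by positivity) (by positivity), inv_div] at hlog
  calc v / (a + v + 1) = 1 - (a + 1) / (a + v + 1) := by field_simp; ring
    _ ≤ _ := hlog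

lemma div_max_one_le_four_mul_log_sub {a v : ℝ} (ha : 0 ≤ a) (hv : 0 ≤ v) (hv1 : v ≤ 1) :
    v / max a 1 ≤ 4 * (Real.log (a + v + 1) - Real.log (a + 1)) := by
  have hmax : a + v + 1 ≤ 4 * max a 1 := by
    linarith [le_max_left a 1, le_max_right a 1]
  calc v / max a 1 ≤ v / ((a + v + 1) / 4) :=
        div_le_div_of_nonneg_left hv (by positivity) (by linarith)
    _ = 4 * (v / (a + v + 1)) := by field_simp
    _ ≤ _ := by gcongr; exact div_add_add_one_le_log_sub ha hv

/-- For a sequence `(u_t)_{t ≥ 1}` with values in `[0,1]` and partial sums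
`U_t = Σ_{ℓ=1}^t u_ℓ`, we have `Σ_{t=0}^T u_{t+1} / max(U_t, 1) ≤ 4 log(U_{T+1} + 1)`. -/
theorem sum_one_over_pseudocount (T : ℕ) (u : ℕ → ℝ)
    (hu : ∀ t, 1 ≤ t → u t ∈ Set.Icc (0 : ℝ) 1) :
    ∑ t ∈ Finset.range (T + 1),
        u (t + 1) / max (∑ ℓ ∈ Finset.Icc 1 t, u ℓ) 1
      ≤ 4 * Real.log ((∑ ℓ ∈ Finset.Icc 1 (T + 1), u ℓ) + 1) := by
  set U : ℕ → ℝ := fun t => ∑ ℓ ∈ Icc 1 t, u ℓ with hU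
  have hU_nonneg (t : ℕ) : 0 ≤ U t :=
    sum_nonneg fun ℓ hℓ => (hu ℓ (mem_Icc.mp hℓ).1).1
  have hU_succ (t : ℕ) : U (t + 1) = U t + u (t + 1) :=
    sum_Icc_succ_top (Nat.le_add_left 1 t) u
  calc ∑ t ∈ range (T + 1), u (t + 1) / max (U t) 1
      ≤ ∑ t ∈ range (T + 1), 4 * (Real.log (U (t + 1) + 1) - Real.log (U t + 1)) := by
        refine sum_le_sum fun t _ => ?_
        rw [hU_succ]
        exact div_max_one_le_four_mul_log_sub (hU_nonneg t) (hu (t + 1) (by omega)).1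
          (hu (t + 1) (by omega)).2
    _ = 4 * Real.log (U (T + 1) + 1) := by
        rw [← mul_sum, sum_range_sub (fun t => Real.log (U t + 1))]
        simp [hU]
end

section
/- Let β : [0,∞) → [1,∞) be nondecreasing and such that x ↦ β(x)/x is nonincreasing on [1,∞), and let c be a real number with 1 ≤ c ≤ β(0). Let n ∈ ℕ and n̄ ≥ 0 be such that n ≥ (1/2)·n̄ − c. Define r = 1 if n = 0 and r = min( β(n)/n , 1 ) if n ≥ 1. Then r ≤ 4 · β(n̄) / max(n̄, 1). -/
/-- counts to pseudo-counts comparison. If `β : [0,∞) → [1,∞)` is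
nondecreasing, `x ↦ β(x)/x` is nonincreasing on `[1,∞)`, `1 ≤ c ≤ β(0)` and
`n ≥ n̄/2 − c`, then `min(β(n)/n, 1)` (taken to be `1` when `n = 0`) is at most
`4 β(n̄) / max(n̄, 1)`. -/
theorem count_to_pseudocount (β : ℝ → ℝ) (c : ℝ)
    (hβ1 : ∀ x, 0 ≤ x → 1 ≤ β x)
    (hβmono : ∀ x y, 0 ≤ x → x ≤ y → β x ≤ β y)
    (hβdiv : ∀ x y, 1 ≤ x → x ≤ y → β y / y ≤ β x / x)
    (hc1 : 1 ≤ c) (hc2 : c ≤ β 0)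
    (n : ℕ) (nbar : ℝ) (hnbar : 0 ≤ nbar)
    (hcount : (n : ℝ) ≥ nbar / 2 - c) :
    (if n = 0 then (1 : ℝ) else min (β n / n) 1) ≤ 4 * β nbar / max nbar 1 := by
  have hβnbar : (1:ℝ) ≤ β nbar := hβ1 nbar hnbar
  have hcβ : c ≤ β nbar := le_trans hc2 (hβmono 0 nbar le_rfl hnbar)
  split_ifs with h0
  · have hn0 : ((n : ℝ)) = 0 := by simp [h0]
    have h1 : nbar ≤ 2 * β nbar := by nlinarith [hcount]
    have hmax : max nbar 1 ≤ 2 * β nbar := max_le h1 (by linarith)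
    have hmaxpos : (0:ℝ) < max nbar 1 := lt_of_lt_of_le one_pos (le_max_right _ _)
    rw [le_div_iff₀ hmaxpos]
    linarith
  · have hn1 : (1:ℝ) ≤ (n:ℝ) := by exact_mod_cast Nat.one_le_iff_ne_zero.mpr h0
    by_cases hbig : (1:ℝ) ≤ 4 * β nbar / max nbar 1
    · exact le_trans (min_le_right _ _) hbig
    · push_neg at hbig
      have hmaxpos : (0:ℝ) < max nbar 1 := lt_of_lt_of_le one_pos (le_max_right _ _)
      have h4 : 4 * β nbar < max nbar 1 := (div_lt_one hmaxpos).mp hbig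
      have hnbar1 : 1 < nbar := by
        by_contra h
        push_neg at h
        rw [max_eq_right h] at h4
        linarith
      have hmax : max nbar 1 = nbar := max_eq_left (le_of_lt hnbar1)
      rw [hmax] at h4 ⊢
      have hn4 : nbar / 4 < (n:ℝ) := by nlinarith
      refine le_trans (min_le_left _ _) ?_
      rcases le_total nbar (n:ℝ) with h | h
      · have hd : β (n:ℝ) / (n:ℝ) ≤ β nbar / nbar := hβdiv nbar (n:ℝ) (by linarith) h
        rw [div_le_div_iff₀ (by linarith) (by linarith)] at hd ⊢
        nlinarith
      · have hβn : β (n:ℝ) ≤ β nbar := hβmono (n:ℝ) nbar (by linarith) h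
        rw [div_le_div_iff₀ (by linarith) (by linarith)]
        nlinarith
end

section
/- Let S be a finite set, let q ∈ Σ_S, let f : S → ℝ satisfy 0 ≤ f(s) ≤ 1 for all s ∈ S, and let λ ≥ 0. Then log( Σ_{s∈S} q(s) · exp( λ·( qf − f(s) ) ) ) ≤ Var_q(f) · ( e^λ − λ − 1 ). -/
open Finset

/-!
Write `φ(x) = (eˣ - 1 - x) / x²`. The function `φ` is nondecreasing: on `x ≥ 0` it is the power
series `∑ xⁿ / (n + 2)!` with nonnegative coefficients, and for `x ≤ 0 < y` we have
`φ(x) ≤ 1/2 ≤ φ(y)`. Since `λ (qf - f(s)) ≤ λ`, this gives the pointwise bound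
`exp(λ d) ≤ 1 + λ d + d² (e^λ - λ - 1)` with `d = qf - f(s)`. Averaging against `q` kills the
linear term and turns `d²` into the variance, and `log t ≤ t - 1` finishes.
-/

namespace Real

lemma exp_sub_one_sub_eq_tsum (x : ℝ) :
    exp x - 1 - x = ∑' n : ℕ, x ^ (n + 2) / (n + 2).factorial := by
  have hsum := summable_pow_div_factorial x
  rw [show exp x = ∑' n : ℕ, x ^ n / n.factorial by
    rw [exp_eq_exp_ℝ, NormedSpace.exp_eq_tsum_div]]
  rw [← hsum.sum_add_tsum_nat_add 2]
  simp [sum_range_succ]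
  ring

lemma exp_le_quadratic_of_nonpos {x : ℝ} (hx : x ≤ 0) : exp x ≤ 1 + x + x ^ 2 / 2 := by
  have hderiv (t : ℝ) :
      HasDerivAt (fun t ↦ 1 + t + t ^ 2 / 2 - exp t) (1 + t - exp t) t := by
    refine ((((hasDerivAt_id' t).const_add 1).add
      ((hasDerivAt_pow 2 t).div_const 2)).sub (hasDerivAt_exp t)).congr_deriv ?_
    ring
  have hanti : Antitone (fun t ↦ 1 + t + t ^ 2 / 2 - exp t) :=
    antitone_of_deriv_nonpos (fun t ↦ (hderiv t).differentiableAt) fun t ↦ by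
      rw [(hderiv t).deriv]
      linarith [add_one_le_exp t]
  simpa using hanti hx

lemma sq_mul_exp_sub_one_sub_le_of_nonneg {x y : ℝ} (hx : 0 ≤ x) (hxy : x ≤ y) :
    y ^ 2 * (exp x - 1 - x) ≤ x ^ 2 * (exp y - 1 - y) := by
  rw [exp_sub_one_sub_eq_tsum, exp_sub_one_sub_eq_tsum, ← tsum_mul_left, ← tsum_mul_left]
  have htail (z : ℝ) : Summable fun n : ℕ ↦ z ^ (n + 2) / (n + 2).factorial :=
    (summable_pow_div_factorial z).comp_injective (add_left_injective 2)
  refine Summable.tsum_le_tsum (fun n ↦ ?_) ((htail x).mul_left _) ((htail y).mul_left _)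
  have hnum : y ^ 2 * x ^ (n + 2) ≤ x ^ 2 * y ^ (n + 2) := by
    calc y ^ 2 * x ^ (n + 2) = x ^ 2 * y ^ 2 * x ^ n := by ring
      _ ≤ x ^ 2 * y ^ 2 * y ^ n := by gcongr
      _ = x ^ 2 * y ^ (n + 2) := by ring
  rw [mul_div_assoc', mul_div_assoc']
  gcongr

lemma sq_mul_exp_sub_one_sub_le {x y : ℝ} (hy : 0 < y) (hxy : x ≤ y) :
    y ^ 2 * (exp x - 1 - x) ≤ x ^ 2 * (exp y - 1 - y) := by
  rcases le_or_gt 0 x with hx | hx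
  · exact sq_mul_exp_sub_one_sub_le_of_nonneg hx hxy
  · have hx' : exp x - 1 - x ≤ x ^ 2 / 2 := by linarith [exp_le_quadratic_of_nonpos hx.le]
    have hy' : y ^ 2 / 2 ≤ exp y - 1 - y := by linarith [quadratic_le_exp_of_nonneg hy.le]
    calc y ^ 2 * (exp x - 1 - x) ≤ y ^ 2 * (x ^ 2 / 2) := by gcongr
      _ = x ^ 2 * (y ^ 2 / 2) := by ring
      _ ≤ x ^ 2 * (exp y - 1 - y) := by gcongr

lemma exp_mul_le_of_le_one {lam d : ℝ} (hlam : 0 ≤ lam) (hd : d ≤ 1) :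
    exp (lam * d) ≤ 1 + lam * d + d ^ 2 * (exp lam - lam - 1) := by
  rcases hlam.eq_or_lt with rfl | hpos
  · simp
  have key := sq_mul_exp_sub_one_sub_le hpos (mul_le_of_le_one_right hlam hd)
  rw [mul_pow, mul_assoc] at key
  have := le_of_mul_le_mul_left key (by positivity)
  linarith

end Real

lemma sum_mul_pos_of_sum_eq_one {ι : Type*} {s : Finset ι} {w g : ι → ℝ}
    (hw : ∀ i ∈ s, 0 ≤ w i) (hw1 : ∑ i ∈ s, w i = 1) (hg : ∀ i ∈ s, 0 < g i) :
    0 < ∑ i ∈ s, w i * g i := by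
  obtain ⟨i, hi, hwi⟩ : ∃ i ∈ s, 0 < w i := exists_lt_of_sum_lt (by simp [hw1])
  exact sum_pos' (fun j hj ↦ mul_nonneg (hw j hj) (hg j hj).le) ⟨i, hi, mul_pos hwi (hg i hi)⟩

lemma sum_mul_exp_le_one_add_sum_mul_sq {ι : Type*} {s : Finset ι} {w d : ι → ℝ} {lam : ℝ}
    (hw : ∀ i ∈ s, 0 ≤ w i) (hw1 : ∑ i ∈ s, w i = 1) (hcentered : ∑ i ∈ s, w i * d i = 0)
    (hd : ∀ i ∈ s, d i ≤ 1) (hlam : 0 ≤ lam) :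
    ∑ i ∈ s, w i * Real.exp (lam * d i) ≤
      1 + (∑ i ∈ s, w i * d i ^ 2) * (Real.exp lam - lam - 1) := by
  calc ∑ i ∈ s, w i * Real.exp (lam * d i)
      ≤ ∑ i ∈ s, w i * (1 + lam * d i + d i ^ 2 * (Real.exp lam - lam - 1)) :=
        sum_le_sum fun i hi ↦
          mul_le_mul_of_nonneg_left (Real.exp_mul_le_of_le_one hlam (hd i hi)) (hw i hi)
    _ = ∑ i ∈ s, w i + lam * ∑ i ∈ s, w i * d i
          + (∑ i ∈ s, w i * d i ^ 2) * (Real.exp lam - lam - 1) := by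
        simp only [mul_sum, sum_mul, ← sum_add_distrib]
        exact sum_congr rfl fun i _ ↦ by ring
    _ = 1 + (∑ i ∈ s, w i * d i ^ 2) * (Real.exp lam - lam - 1) := by
        rw [hw1, hcentered, mul_zero, add_zero]

/-- For `q` in the simplex over a finite set `S`, `f : S → ℝ` with values
in `[0,1]` and `λ ≥ 0`,
`log( Σ_s q(s) exp(λ (qf − f(s))) ) ≤ Var_q(f) (e^λ − λ − 1)`. -/
theorem log_mgf_bound {S : Type*} [Fintype S]
    (q : S → ℝ) (hq : ∀ s, 0 ≤ q s) (hqsum : ∑ s, q s = 1)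
    (f : S → ℝ) (hf : ∀ s, 0 ≤ f s ∧ f s ≤ 1)
    (lam : ℝ) (hlam : 0 ≤ lam) :
    Real.log (∑ s, q s * Real.exp (lam * ((∑ s', q s' * f s') - f s)))
      ≤ (∑ s, q s * (f s - ∑ s', q s' * f s') ^ 2) * (Real.exp lam - lam - 1) := by
  set μ := ∑ s', q s' * f s' with hμ
  have hμ_le : μ ≤ 1 := by
    calc μ ≤ ∑ s, q s * 1 := sum_le_sum fun s _ ↦ mul_le_mul_of_nonneg_left (hf s).2 (hq s)
      _ = 1 := by simp [hqsum]
  have hcentered : ∑ s, q s * (μ - f s) = 0 := by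
    simp only [mul_sub, sum_sub_distrib, ← sum_mul, hqsum, one_mul, hμ, sub_self]
  have hmgf := sum_mul_exp_le_one_add_sum_mul_sq (fun s _ ↦ hq s) hqsum hcentered
    (fun s _ ↦ by linarith [(hf s).1]) hlam
  simp only [sub_sq_comm μ] at hmgf
  have hpos : 0 < ∑ s, q s * Real.exp (lam * (μ - f s)) :=
    sum_mul_pos_of_sum_eq_one (fun s _ ↦ hq s) hqsum fun s _ ↦ Real.exp_pos _
  linarith [Real.log_le_sub_one_of_pos hpos]
end

section
/- Consider a finite episodic MDP with finite state set S, finite action set A, horizon H, transition kernels p_h : S × A → Σ_S for h ∈ {1,…,H}, deterministic rewards r_h : S × A → ℝ, and a deterministic policy π = (π_h)_{h∈{1,…,H}} with π_h : S → A. For every h ∈ {1,…,H} and (s,a) ∈ S × A, the conditional second moment of the centered return satisfies E_π[ ( Σ_{h'=h}^H r_{h'}(s_{h'}, a_{h'}) − Q_h^π(s,a) )² | (s_h, a_h) = (s,a) ] = σQ_h^π(s,a). In particular, E_π[ ( Σ_{h=1}^H r_h(s_h, a_h) − V_1^π(s_1) )² ] = σV_1^π(s_1) = Σ_{h=1}^H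 Σ_{(s,a)} p_h^π(s,a) · Var_{p_h(·|s,a)}(V_{h+1}^π), where p_h^π(s,a) is the probability of being at state-action pair (s,a) at step h when following π from s_1. -/
open Finset

/-- Variance of `f : S → ℝ` under a finitely supported distribution `p ∈ Σ_S`. -/
noncomputable def Varp {S : Type*} [Fintype S] (p f : S → ℝ) : ℝ :=
  ∑ s, p s * (f s - ∑ s', p s' * f s') ^ 2

section MDP

variable {S A : Type*} [Fintype S] [Fintype A]

/-- Value function of the deterministic policy `π` with `j` steps to go in a horizon-`H`
episodic MDP: `Vval H p r π j s = V_{H+1-j}^π(s)` (so `Vval H p r π 0 = V_{H+1}^π = 0`). -/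
noncomputable def Vval (H : ℕ) (p : ℕ → S → A → S → ℝ) (r : ℕ → S → A → ℝ)
    (π : ℕ → S → A) : ℕ → S → ℝ
  | 0, _ => 0
  | j + 1, s =>
      r (H - j) s (π (H - j) s)
        + ∑ s', p (H - j) s (π (H - j) s) s' * Vval H p r π j s'

/-- Q-value function with `j` steps to go: `Qval H p r π j s a = Q_{H+1-j}^π(s,a)`. -/
noncomputable def Qval (H : ℕ) (p : ℕ → S → A → S → ℝ) (r : ℕ → S → A → ℝ)
    (π : ℕ → S → A) : ℕ → S → A → ℝ
  | 0, _, _ => 0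
  | j + 1, s, a => r (H - j) s a + ∑ s', p (H - j) s a s' * Vval H p r π j s'

/-- Bellman-type variance function `σV`: `sigmaV H p r π j s = σV_{H+1-j}^π(s)`. -/
noncomputable def sigmaV (H : ℕ) (p : ℕ → S → A → S → ℝ) (r : ℕ → S → A → ℝ)
    (π : ℕ → S → A) : ℕ → S → ℝ
  | 0, _ => 0
  | j + 1, s =>
      Varp (p (H - j) s (π (H - j) s)) (Vval H p r π j)
        + ∑ s', p (H - j) s (π (H - j) s) s' * sigmaV H p r π j s'

/-- Bellman-type variance function `σQ`: `sigmaQ H p r π j s a = σQ_{H+1-j}^π(s,a)`. -/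
noncomputable def sigmaQ (H : ℕ) (p : ℕ → S → A → S → ℝ) (r : ℕ → S → A → ℝ)
    (π : ℕ → S → A) : ℕ → S → A → ℝ
  | 0, _, _ => 0
  | j + 1, s, a =>
      Varp (p (H - j) s a) (Vval H p r π j)
        + ∑ s', p (H - j) s a s' * sigmaV H p r π j s'

/-- Expectation, over a trajectory that starts in state `s` with `j` steps to go (i.e. at
step `H+1-j`) and follows the policy `π`, of `f` applied to the sum of the rewards
collected along the trajectory.  This is the iterated-bind (tower-rule) definition of the
trajectory expectation. -/
noncomputable def Eret (H : ℕ) (p : ℕ → S → A → S → ℝ) (r : ℕ → S → A → ℝ)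
    (π : ℕ → S → A) : ℕ → S → (ℝ → ℝ) → ℝ
  | 0, _, f => f 0
  | j + 1, s, f =>
      ∑ s', p (H - j) s (π (H - j) s) s'
        * Eret H p r π j s' (fun x => f (r (H - j) s (π (H - j) s) + x))

/-- Same as `Eret`, but conditionally on the first action being `a` (the following
actions are chosen by `π`). -/
noncomputable def EretSA (H : ℕ) (p : ℕ → S → A → S → ℝ) (r : ℕ → S → A → ℝ)
    (π : ℕ → S → A) : ℕ → S → A → (ℝ → ℝ) → ℝ
  | 0, _, _, f => f 0
  | j + 1, s, a, f =>
      ∑ s', p (H - j) s a s' * Eret H p r π j s' (fun x => f (r (H - j) s a + x))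

/-- State occupancy measure: `occ p π s1 j s` is the probability of being in state `s`
at step `j + 1` when starting from `s1` at step `1` and following the policy `π`. -/
noncomputable def occ [DecidableEq S] (p : ℕ → S → A → S → ℝ) (π : ℕ → S → A)
    (s1 : S) : ℕ → S → ℝ
  | 0, s => if s = s1 then 1 else 0
  | j + 1, s' => ∑ s, occ p π s1 j s * p (j + 1) s (π (j + 1) s) s'

/-!
Conditioning on the first transition, the return from `(s, a)` is `r(s, a)` plus the return
from the next state `s'`, so the second moment about any centre `c` splits, by
`E (X - c)² = Var X + (E X - c)²`, into the variance of `V_{h+1}(s')`, the expected second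
moments of the future returns, and a squared bias. The induction is therefore run for an
arbitrary centre `c`, since the reward shifts it at every step. Unrolling the recursion for
`σV` along the occupancy measures gives the sum over steps.
-/

omit [Fintype A]

theorem sum_mul_sub_sq_eq_Varp_add {P : S → ℝ} (hP : ∑ s, P s = 1) (f : S → ℝ) (c : ℝ) :
    ∑ s, P s * (f s - c) ^ 2 = Varp P f + (∑ s, P s * f s - c) ^ 2 := by
  set m := ∑ s, P s * f s
  have hcentered : ∑ s, P s * (f s - m) = 0 := by
    simp only [mul_sub, sum_sub_distrib, ← sum_mul, hP, one_mul, sub_self, m]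
  calc ∑ s, P s * (f s - c) ^ 2
      = ∑ s, (P s * (f s - m) ^ 2 + 2 * (m - c) * (P s * (f s - m)) + (m - c) ^ 2 * P s) :=
        sum_congr rfl fun _ _ => by ring
    _ = Varp P f + (m - c) ^ 2 := by
        rw [sum_add_distrib, sum_add_distrib, ← mul_sum, ← mul_sum, hcentered, hP, Varp]
        ring

variable {H : ℕ} {p : ℕ → S → A → S → ℝ} {r : ℕ → S → A → ℝ} {π : ℕ → S → A}

theorem EretSA_succ_sub_sq {j : ℕ} {s : S} {a : A} (hP : ∑ s', p (H - j) s a s' = 1)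
    (ih : ∀ s' c, Eret H p r π j s' (fun x => (x - c) ^ 2)
      = sigmaV H p r π j s' + (Vval H p r π j s' - c) ^ 2) (c : ℝ) :
    EretSA H p r π (j + 1) s a (fun x => (x - c) ^ 2)
      = sigmaQ H p r π (j + 1) s a + (Qval H p r π (j + 1) s a - c) ^ 2 := by
  have hshift : ∀ s', Eret H p r π j s' (fun x => (r (H - j) s a + x - c) ^ 2)
      = sigmaV H p r π j s' + (Vval H p r π j s' - (c - r (H - j) s a)) ^ 2 := fun s' => by
    rw [← ih]; congr 1; funext x; ring
  simp only [EretSA, sigmaQ, Qval, hshift, mul_add, sum_add_distrib,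
    sum_mul_sub_sq_eq_Varp_add hP]
  ring

theorem Eret_sub_sq (hp : ∀ h s a, 1 ≤ h → h ≤ H → ∑ s', p h s a s' = 1) {j : ℕ} (hj : j ≤ H)
    (s : S) (c : ℝ) :
    Eret H p r π j s (fun x => (x - c) ^ 2) = sigmaV H p r π j s + (Vval H p r π j s - c) ^ 2 := by
  induction j generalizing s c with
  | zero => simp [Eret, sigmaV, Vval]
  | succ j ih =>
    exact EretSA_succ_sub_sq (hp _ _ _ (by omega) (by omega)) (ih (by omega)) c

theorem EretSA_sub_Qval_sq (hp : ∀ h s a, 1 ≤ h → h ≤ H → ∑ s', p h s a s' = 1) {j : ℕ}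
    (hj : j + 1 ≤ H) (s : S) (a : A) :
    EretSA H p r π (j + 1) s a (fun x => (x - Qval H p r π (j + 1) s a) ^ 2)
      = sigmaQ H p r π (j + 1) s a := by
  rw [EretSA_succ_sub_sq (hp _ _ _ (by omega) (by omega))
    (Eret_sub_sq hp (by omega)), sub_self]
  ring

theorem sum_occ_mul_sum_p_mul [DecidableEq S] (s1 : S) (k : ℕ) (g : S → ℝ) :
    ∑ s, occ p π s1 k s * ∑ s', p (k + 1) s (π (k + 1) s) s' * g s'
      = ∑ s', occ p π s1 (k + 1) s' * g s' := by
  simp only [occ, mul_sum, sum_mul]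
  rw [sum_comm]
  exact sum_congr rfl fun _ _ => sum_congr rfl fun _ _ => by ring

theorem sum_occ_mul_sigmaV [DecidableEq S] (s1 : S) {n k : ℕ} (hnk : k + n = H) :
    ∑ s, occ p π s1 k s * sigmaV H p r π n s
      = ∑ h ∈ Icc (k + 1) H, ∑ s,
          occ p π s1 (h - 1) s * Varp (p h s (π h s)) (Vval H p r π (H - h)) := by
  induction n generalizing k with
  | zero => simp [sigmaV, ← hnk]
  | succ n ih =>
    have hstep : H - n = k + 1 := by omega
    rw [← insert_Icc_succ_left_eq_Icc (by omega : k + 1 ≤ H), sum_insert (by simp),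
      Order.succ_eq_add_one, ← ih (by omega : k + 1 + n = H)]
    simp only [sigmaV, hstep, mul_add, sum_add_distrib, sum_occ_mul_sum_p_mul,
      Nat.add_sub_cancel, show H - (k + 1) = n by omega]

theorem law_of_total_variance_general {S A : Type*} [Fintype S] [Fintype A] [DecidableEq S]
    [DecidableEq A]
    (H : ℕ)
    (p : ℕ → S → A → S → ℝ) (r : ℕ → S → A → ℝ) (π : ℕ → S → A) (s1 : S)
    (hp : ∀ h s a, 1 ≤ h → h ≤ H →
      (∀ s', 0 ≤ p h s a s') ∧ ∑ s', p h s a s' = 1) :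
    (∀ h, 1 ≤ h → h ≤ H → ∀ s a,
      EretSA H p r π (H + 1 - h) s a
          (fun x => (x - Qval H p r π (H + 1 - h) s a) ^ 2)
        = sigmaQ H p r π (H + 1 - h) s a)
    ∧ Eret H p r π H s1 (fun x => (x - Vval H p r π H s1) ^ 2)
        = sigmaV H p r π H s1
    ∧ sigmaV H p r π H s1
        = ∑ h ∈ Finset.Icc 1 H, ∑ s, ∑ a,
            (occ p π s1 (h - 1) s * if a = π h s then (1 : ℝ) else 0)
              * Varp (p h s a) (Vval H p r π (H - h)) := by
  have hsum : ∀ h s a, 1 ≤ h → h ≤ H → ∑ s', p h s a s' = 1 :=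
    fun h s a h1 hH => (hp h s a h1 hH).2
  refine ⟨fun h h1 hh s a => ?_, ?_, ?_⟩
  · rw [show H + 1 - h = H - h + 1 by omega]
    exact EretSA_sub_Qval_sq hsum (by omega) s a
  · simpa using Eret_sub_sq (r := r) (π := π) hsum le_rfl s1 (Vval H p r π H s1)
  · have hstart : sigmaV H p r π H s1 = ∑ s, occ p π s1 0 s * sigmaV H p r π H s := by
      simp [occ]
    rw [hstart, sum_occ_mul_sigmaV s1 (zero_add H)]
    refine sum_congr rfl fun h _ => sum_congr rfl fun s _ => ?_
    simp only [mul_ite, mul_one, mul_zero, ite_mul, zero_mul, sum_ite_eq', mem_univ, if_true]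

/-- Law of total variance in an episodic MDP.  For every step
`h ∈ {1,…,H}` and state-action pair `(s,a)`, the conditional second moment of the
centered return equals the Bellman variance:
`E_π[(Σ_{h'=h}^H r_{h'}(s_{h'},a_{h'}) − Q_h^π(s,a))² | (s_h,a_h) = (s,a)] = σQ_h^π(s,a)`;
in particular
`E_π[(Σ_{h=1}^H r_h(s_h,a_h) − V_1^π(s_1))²] = σV_1^π(s_1)
  = Σ_{h=1}^H Σ_{(s,a)} p_h^π(s,a) Var_{p_h(·|s,a)}(V_{h+1}^π)`,
where `p_h^π(s,a) = occ p π s1 (h-1) s · 1{a = π_h(s)}`.  Step `h` corresponds to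
`H + 1 - h` steps to go. -/
theorem law_of_total_variance {S A : Type*} [Fintype S] [Fintype A] [DecidableEq S]
    [DecidableEq A]
    (H : ℕ) (hH : 1 ≤ H)
    (p : ℕ → S → A → S → ℝ) (r : ℕ → S → A → ℝ) (π : ℕ → S → A) (s1 : S)
    (hp : ∀ h s a, 1 ≤ h → h ≤ H →
      (∀ s', 0 ≤ p h s a s') ∧ ∑ s', p h s a s' = 1) :
    (∀ h, 1 ≤ h → h ≤ H → ∀ s a,
      EretSA H p r π (H + 1 - h) s a
          (fun x => (x - Qval H p r π (H + 1 - h) s a) ^ 2)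
        = sigmaQ H p r π (H + 1 - h) s a)
    ∧ Eret H p r π H s1 (fun x => (x - Vval H p r π H s1) ^ 2)
        = sigmaV H p r π H s1
    ∧ sigmaV H p r π H s1
        = ∑ h ∈ Finset.Icc 1 H, ∑ s, ∑ a,
            (occ p π s1 (h - 1) s * if a = π h s then (1 : ℝ) else 0)
              * Varp (p h s a) (Vval H p r π (H - h)) :=
  law_of_total_variance_general H p r π s1 hp

end MDP
end
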